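/- Let Ω ⊂ ℝ² be a bounded, open, connected set with Lipschitz boundary, let ((x_k,y_k))_{k∈I} be a finite family of pairs of points of cl(Ω) satisfying (P_f), and let T be the associated functional on Lip₀(Ω), T(φ) := Σ_{k∈I} (φ(x_k) − φ(y_k)). Then ‖T‖_{flat,α} = min{ E(I_P,I_D,τ) : {I_P, I_D} a partition of I, τ : I_D → I injective }; in particular both the supremum defining ‖T‖_{flat,α} and this minimum are attained. -/

import Mathlib

open MeasureTheory Metric Filter Set
open scoped ENNReal NNReal Topology Classical

noncomputable section

abbrev R2 := EuclideanSpace ℝ (Fin 2)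

/-- `Ω ⊂ ℝ²` has Lipschitz boundary: near every boundary point, after a rigid motion,
`Ω` coincides with the open region strictly above the graph of a Lipschitz function. -/
def HasLipschitzBoundary (Ω : Set R2) : Prop :=
  ∀ p ∈ frontier Ω, ∃ r : ℝ, 0 < r ∧ ∃ (f : R2 ≃ᵢ R2) (γ : ℝ → ℝ) (L : ℝ≥0),
    LipschitzWith L γ ∧ ∀ x ∈ Metric.ball p r, (x ∈ Ω ↔ γ (f x 0) < f x 1)

/-- `G` is the weak (distributional) gradient of `u` on `Ω`:
`∫_Ω u_i ∂_j φ = -∫_Ω G_{ij} φ` for all test functions `φ ∈ C_c^∞(Ω)`. -/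
def IsWeakGradient (Ω : Set R2) (u : R2 → R2) (G : R2 → Matrix (Fin 2) (Fin 2) ℝ) : Prop :=
  ∀ φ : R2 → ℝ, ContDiff ℝ (⊤ : ℕ∞) φ → HasCompactSupport φ → tsupport φ ⊆ Ω →
    ∀ i j : Fin 2,
      (∫ x in Ω, u x i * fderiv ℝ φ x (EuclideanSpace.single j 1)) =
        - ∫ x in Ω, G x i j * φ x

/-- `u ∈ W^{1,1}(Ω;ℝ²)` with weak gradient `G`. -/
def MemW11 (Ω : Set R2) (u : R2 → R2) (G : R2 → Matrix (Fin 2) (Fin 2) ℝ) : Prop :=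
  IntegrableOn u Ω ∧ (∀ i j : Fin 2, IntegrableOn (fun x => G x i j) Ω) ∧
    IsWeakGradient Ω u G

/-- `|u| = 1` a.e. in `Ω`. -/
def SphereValued (Ω : Set R2) (u : R2 → R2) : Prop :=
  ∀ᵐ x ∂(volume.restrict Ω), ‖u x‖ = 1

/-- Frobenius norm of a `2×2` matrix. -/
def frob (M : Matrix (Fin 2) (Fin 2) ℝ) : ℝ :=
  Real.sqrt (∑ i, ∑ j, (M i j) ^ 2)

/-- Jacobian matrix of a map `v : ℝ² → ℝ²`. -/
def jacobianMatrix (v : R2 → R2) (x : R2) : Matrix (Fin 2) (Fin 2) ℝ :=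
  Matrix.of fun i j => fderiv ℝ v x (EuclideanSpace.single j 1) i

/-- Classical graph area `A(v,A) = ∫_A √(1 + |∇v|² + (Jv)²)` of a `C¹` map. -/
def classicalArea (A : Set R2) (v : R2 → R2) : ℝ≥0∞ :=
  ∫⁻ x in A, ENNReal.ofReal
    (Real.sqrt (1 + (∑ i, ∑ j, (jacobianMatrix v x i j) ^ 2) + (jacobianMatrix v x).det ^ 2))

/-- `L¹`-relaxed area functional `𝒜(u,A)`. -/
def relaxedArea (u : R2 → R2) (A : Set R2) : ℝ≥0∞ :=
  sInf { a : ℝ≥0∞ | ∃ v : ℕ → R2 → R2,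
    (∀ k, ContDiffOn ℝ 1 (v k) A) ∧
    (∀ k, IntegrableOn (fun x => v k x - u x) A) ∧
    Tendsto (fun k => ∫ x in A, ‖v k x - u x‖) atTop (nhds 0) ∧
    a = Filter.liminf (fun k => classicalArea A (v k)) atTop }

/-- `λ_u = (1/2)(u₁ ∇^⊥u₂ − u₂ ∇^⊥u₁)`, computed from the weak gradient `G`. -/
def lambdaVec (u : R2 → R2) (G : R2 → Matrix (Fin 2) (Fin 2) ℝ) (x : R2) : Fin 2 → ℝ :=
  ![ (1 / 2) * (-(u x 0) * G x 1 1 + u x 1 * G x 0 1),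
     (1 / 2) * (u x 0 * G x 1 0 - u x 1 * G x 0 0) ]

/-- Distributional Jacobian pairing `⟨Det(∇u), φ⟩ = ∫_Ω λ_u · ∇φ`. -/
def detPairing (Ω : Set R2) (u : R2 → R2) (G : R2 → Matrix (Fin 2) (Fin 2) ℝ)
    (φ : R2 → ℝ) : ℝ :=
  ∫ x in Ω, ∑ j, lambdaVec u G x j * fderiv ℝ φ x (EuclideanSpace.single j 1)

/-- `φ ∈ Lip₀(Ω)`: Lipschitz on `cl(Ω)` and vanishing on `∂Ω`. -/
def MemLip0 (Ω : Set R2) (φ : R2 → ℝ) : Prop :=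
  (∃ L : ℝ≥0, LipschitzOnWith L φ (closure Ω)) ∧ ∀ p ∈ frontier Ω, φ p = 0

/-- Admissible test functions for the flat norm: Lipschitz constant `≤ L` on `cl(Ω)`,
vanishing on `Z`, and bounded by `1` on `cl(Ω)`. -/
def FlatAdmissible (Ω Z : Set R2) (L : ℝ≥0) (φ : R2 → ℝ) : Prop :=
  LipschitzOnWith L φ (closure Ω) ∧ (∀ p ∈ Z, φ p = 0) ∧ ∀ p ∈ closure Ω, |φ p| ≤ 1

/-- Flat norm of a functional `F`, with vanishing condition on the set `Z`. -/
def flatNormOn (Ω Z : Set R2) (L : ℝ≥0) (F : (R2 → ℝ) → ℝ) : ℝ≥0∞ :=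
  ⨆ φ ∈ {φ : R2 → ℝ | FlatAdmissible Ω Z L φ}, ENNReal.ofReal (F φ)

/-- Flat norm of a functional `F` on `Lip₀(Ω)`; `L = 2` gives `‖·‖_{flat,α}` (α = 1/2),
`L = 1` gives `‖·‖_flat`. -/
def flatNorm (Ω : Set R2) (L : ℝ≥0) (F : (R2 → ℝ) → ℝ) : ℝ≥0∞ :=
  flatNormOn Ω (frontier Ω) L F

/-- `d̄_Ω(x,y) = min{|x−y|, dist(x,∂Ω) + dist(y,∂Ω)}`. -/
def dbar (Ω : Set R2) (x y : R2) : ℝ :=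
  min (dist x y) (Metric.infDist x (frontier Ω) + Metric.infDist y (frontier Ω))

/-- Countably subadditive interior envelope `𝒜**(u,V)` (relative to `Ω`). -/
def envA (u : R2 → R2) (Ω V : Set R2) : ℝ≥0∞ :=
  sInf { a : ℝ≥0∞ | ∃ A : ℕ → Set R2,
    (∀ k, IsOpen (A k) ∧ A k ⊆ Ω) ∧ V ⊆ ⋃ k, A k ∧ a = ∑' k, relaxedArea u (A k) }

/-- Property `(P_f)` for a finite family of pairs of points of `cl(Ω)`. -/
def SatisfiesPf (Ω : Set R2) {n : ℕ} (x y : Fin n → R2) : Prop :=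
  (∀ k, (x k ∈ Ω ∧ y k ∈ frontier Ω ∧ dist (x k) (y k) = Metric.infDist (x k) (frontier Ω)) ∨
        (y k ∈ Ω ∧ x k ∈ frontier Ω ∧ dist (x k) (y k) = Metric.infDist (y k) (frontier Ω))) ∧
  ∀ i j, x i ∈ Ω → y j ∈ Ω → x i ≠ y j

/-- The points of the family `x, y` lying in `Ω` are distinct and three by three
not collinear. -/
def InteriorPointsGeneric (Ω : Set R2) {n : ℕ} (x y : Fin n → R2) : Prop :=
  (∀ a b : Fin n ⊕ Fin n, Sum.elim x y a ∈ Ω → Sum.elim x y b ∈ Ω → a ≠ b →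
    Sum.elim x y a ≠ Sum.elim x y b) ∧
  ∀ a b c : Fin n ⊕ Fin n, Sum.elim x y a ∈ Ω → Sum.elim x y b ∈ Ω → Sum.elim x y c ∈ Ω →
    a ≠ b → a ≠ c → b ≠ c →
    ¬ Collinear ℝ ({Sum.elim x y a, Sum.elim x y b, Sum.elim x y c} : Set R2)

/-- `ι(w₁,w₂) = (w₁,−w₂)`. -/
def conjPt (w : R2) : R2 := (WithLp.equiv 2 (Fin 2 → ℝ)).symm ![w 0, -(w 1)]

/-- `u` is a (positive/negative) vortex around the points of the family lying in `Ω`: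
the closed discs of radii `ρ` are contained in `Ω` and pairwise disjoint,
`u(z) = (z−x_i)/|z−x_i|` on `B_{ρ}(x_i)` and `u(z) = ι((z−y_j)/|z−y_j|)` on `B_{ρ}(y_j)`. -/
def VortexAt (Ω : Set R2) (u : R2 → R2) {n : ℕ} (x y : Fin n → R2)
    (ρ : Fin n ⊕ Fin n → ℝ) : Prop :=
  (∀ a, Sum.elim x y a ∈ Ω → Metric.closedBall (Sum.elim x y a) (ρ a) ⊆ Ω) ∧
  (∀ a b, a ≠ b → Sum.elim x y a ∈ Ω → Sum.elim x y b ∈ Ω →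
    Disjoint (Metric.closedBall (Sum.elim x y a) (ρ a))
      (Metric.closedBall (Sum.elim x y b) (ρ b))) ∧
  (∀ i, x i ∈ Ω → ∀ᵐ z ∂(volume.restrict (Metric.ball (x i) (ρ (Sum.inl i)))),
    u z = ‖z - x i‖⁻¹ • (z - x i)) ∧
  (∀ i, y i ∈ Ω → ∀ᵐ z ∂(volume.restrict (Metric.ball (y i) (ρ (Sum.inr i)))),
    u z = conjPt (‖z - y i‖⁻¹ • (z - y i)))

/-- The energy `E(I_P, I_D, τ)` of a partition `{I_Dᶜ, I_D}` of `I` and an injection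
`τ : I_D → I`. -/
def energy (Ω : Set R2) {n : ℕ} (x y : Fin n → R2) (ID : Finset (Fin n))
    (τ : Fin n → Fin n) : ℝ≥0∞ :=
  ((IDᶜ.filter fun k => x k ∈ Ω).card : ℝ≥0∞) +
  (((Finset.univ \ ID.image τ).filter fun j => y j ∈ Ω).card : ℝ≥0∞) +
  2 * ∑ k ∈ ID, μH[1] (segment ℝ (y (τ k)) (x k) ∩ Ω)


theorem egervary {L R : Type} [Fintype L] [Fintype R] [Nonempty L] [Nonempty R]
    (hcard : Fintype.card L = Fintype.card R) (C : L → R → ℝ) :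
    ∃ (α : L → ℝ) (β : R → ℝ) (π : L ≃ R),
      (∀ l r, α l - β r ≤ C l r) ∧ (∀ l, α l - β (π l) = C l (π l)) := by
  classical
  obtain ⟨r₀⟩ : Nonempty R := inferInstance
  set D : (L → ℝ) × (R → ℝ) → ℝ := fun ab => (∑ l, ab.1 l) - ∑ r, ab.2 r with hD
  set T : Set ((L → ℝ) × (R → ℝ)) :=
    {ab | (∀ l r, ab.1 l - ab.2 r ≤ C l r) ∧ (∀ l, ∃ r, ab.1 l - ab.2 r = C l r)
      ∧ (∀ r, ∃ l, ab.1 l - ab.2 r = C l r) ∧ ab.2 r₀ = 0} with hT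
  -- normalization of a feasible pair into `T` without decreasing `D`
  have key : ∀ ab : (L → ℝ) × (R → ℝ), (∀ l r, ab.1 l - ab.2 r ≤ C l r) →
      ∃ cd ∈ T, D ab ≤ D cd := by
    rintro ⟨α, β⟩ hf
    set α1 : L → ℝ := fun l => Finset.univ.inf' Finset.univ_nonempty (fun r => β r + C l r)
      with hα1
    set β2 : R → ℝ := fun r => Finset.univ.sup' Finset.univ_nonempty (fun l => α1 l - C l r)
      with hβ2
    have hα1_ge : ∀ l, α l ≤ α1 l := by
      intro l
      apply Finset.le_inf'
      intro r _
      linarith [hf l r]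
    have hα1_le : ∀ l r, α1 l ≤ β r + C l r := fun l r =>
      Finset.inf'_le _ (Finset.mem_univ r)
    have hβ2_ge : ∀ l r, α1 l - C l r ≤ β2 r := by
      intro l r
      rw [hβ2]
      exact Finset.le_sup' (fun l => α1 l - C l r) (Finset.mem_univ l)
    have hβ2_le : ∀ r, β2 r ≤ β r := by
      intro r
      apply Finset.sup'_le
      intro l _
      linarith [hα1_le l r]
    have hfeas : ∀ l r, α1 l - β2 r ≤ C l r := by
      intro l r
      linarith [hβ2_ge l r]
    have hlt : ∀ l, ∃ r, α1 l - β2 r = C l r := by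
      intro l
      obtain ⟨r, -, hr⟩ := Finset.exists_mem_eq_inf' Finset.univ_nonempty (fun r => β r + C l r)
      refine ⟨r, ?_⟩
      have h1 : α1 l = β r + C l r := hr
      have h2 : α1 l - C l r ≤ β2 r := hβ2_ge l r
      have h3 : β2 r ≤ β r := hβ2_le r
      linarith
    have hrt : ∀ r, ∃ l, α1 l - β2 r = C l r := by
      intro r
      obtain ⟨l, -, hl⟩ := Finset.exists_mem_eq_sup' Finset.univ_nonempty
        (fun l => α1 l - C l r)
      refine ⟨l, ?_⟩
      have : β2 r = α1 l - C l r := hl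
      linarith
    refine ⟨(fun l => α1 l - β2 r₀, fun r => β2 r - β2 r₀), ?_, ?_⟩
    · refine ⟨fun l r => by simpa using hfeas l r, fun l => ?_, fun r => ?_, by simp⟩
      · obtain ⟨r, hr⟩ := hlt l
        exact ⟨r, by simpa using hr⟩
      · obtain ⟨l, hl⟩ := hrt r
        exact ⟨l, by simpa using hl⟩
    · have h1 : (∑ l, α l) ≤ ∑ l, α1 l := Finset.sum_le_sum fun l _ => hα1_ge l
      have h2 : (∑ r, β2 r) ≤ ∑ r, β r := Finset.sum_le_sum fun r _ => hβ2_le r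
      have e1 : (∑ l, (α1 l - β2 r₀)) = (∑ l, α1 l) - (Fintype.card L : ℝ) * β2 r₀ := by
        rw [Finset.sum_sub_distrib, Finset.sum_const]
        simp [Finset.card_univ, mul_comm]
      have e2 : (∑ r, (β2 r - β2 r₀)) = (∑ r, β2 r) - (Fintype.card R : ℝ) * β2 r₀ := by
        rw [Finset.sum_sub_distrib, Finset.sum_const]
        simp [Finset.card_univ, mul_comm]
      simp only [hD]
      rw [e1, e2, hcard]
      linarith
  -- T is nonempty
  have hTne : T.Nonempty := by
    obtain ⟨cd, hcdT, -⟩ := key (fun l => Finset.univ.inf' Finset.univ_nonempty (fun r => C l r), 0)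
      (fun l r => by simpa using (⟨r, le_rfl⟩ : ∃ b, C l b ≤ C l r))
    exact ⟨cd, hcdT⟩
  -- T is bounded
  set M : ℝ := Finset.univ.sup' Finset.univ_nonempty
    (fun l => Finset.univ.sup' Finset.univ_nonempty (fun r => |C l r|)) with hM
  have hMC : ∀ l r, |C l r| ≤ M := by
    intro l r
    calc |C l r| ≤ Finset.univ.sup' Finset.univ_nonempty (fun r => |C l r|) :=
          Finset.le_sup' (fun r => |C l r|) (Finset.mem_univ r)
      _ ≤ M := by
          rw [hM]
          exact Finset.le_sup' (fun l => Finset.univ.sup' Finset.univ_nonempty fun r => |C l r|)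
            (Finset.mem_univ l)
  have hTbdd : ∀ ab ∈ T, (∀ l, -(3*M) ≤ ab.1 l ∧ ab.1 l ≤ M) ∧
      (∀ r, -(2*M) ≤ ab.2 r ∧ ab.2 r ≤ 2*M) := by
    rintro ⟨α, β⟩ ⟨hfeas, hlt, hrt, hr₀⟩
    have hαub : ∀ l, α l ≤ M := by
      intro l
      have := hfeas l r₀
      have := (abs_le.mp (hMC l r₀)).2
      simp only at hr₀
      nlinarith [hfeas l r₀]
    obtain ⟨l₀, hl₀⟩ := hrt r₀
    have hl₀lb : -M ≤ α l₀ := by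
      have := (abs_le.mp (hMC l₀ r₀)).1
      simp only at hr₀ hl₀
      nlinarith
    have hβlb : ∀ r, -(2*M) ≤ β r := by
      intro r
      have h := hfeas l₀ r
      have := (abs_le.mp (hMC l₀ r)).2
      nlinarith
    have hβub : ∀ r, β r ≤ 2*M := by
      intro r
      obtain ⟨l, hl⟩ := hrt r
      have := hαub l
      have := (abs_le.mp (hMC l r)).1
      nlinarith
    have hαlb : ∀ l, -(3*M) ≤ α l := by
      intro l
      obtain ⟨r, hr⟩ := hlt l
      have := hβlb r
      have := (abs_le.mp (hMC l r)).1
      nlinarith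
    exact ⟨fun l => ⟨hαlb l, hαub l⟩, fun r => ⟨hβlb r, hβub r⟩⟩
  -- T is closed
  have hTclosed : IsClosed T := by
    have c1 : ∀ (l : L) (r : R), Continuous (fun ab : (L → ℝ) × (R → ℝ) => ab.1 l - ab.2 r) :=
      fun l r => ((continuous_apply l).comp continuous_fst).sub
        ((continuous_apply r).comp continuous_snd)
    have h1 : IsClosed {ab : (L → ℝ) × (R → ℝ) | ∀ l r, ab.1 l - ab.2 r ≤ C l r} := by
      rw [Set.setOf_forall]
      refine isClosed_iInter fun l => ?_
      rw [Set.setOf_forall]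
      exact isClosed_iInter fun r => isClosed_le (c1 l r) continuous_const
    have h2 : IsClosed {ab : (L → ℝ) × (R → ℝ) | ∀ l, ∃ r, ab.1 l - ab.2 r = C l r} := by
      rw [Set.setOf_forall]
      refine isClosed_iInter fun l => ?_
      rw [Set.setOf_exists]
      exact isClosed_iUnion_of_finite fun r => isClosed_eq (c1 l r) continuous_const
    have h3 : IsClosed {ab : (L → ℝ) × (R → ℝ) | ∀ r, ∃ l, ab.1 l - ab.2 r = C l r} := by
      rw [Set.setOf_forall]
      refine isClosed_iInter fun r => ?_
      rw [Set.setOf_exists]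
      exact isClosed_iUnion_of_finite fun l => isClosed_eq (c1 l r) continuous_const
    have h4 : IsClosed {ab : (L → ℝ) × (R → ℝ) | ab.2 r₀ = 0} :=
      isClosed_eq ((continuous_apply r₀).comp continuous_snd) continuous_const
    have : T = {ab : (L → ℝ) × (R → ℝ) | ∀ l r, ab.1 l - ab.2 r ≤ C l r} ∩
        ({ab | ∀ l, ∃ r, ab.1 l - ab.2 r = C l r} ∩
        ({ab | ∀ r, ∃ l, ab.1 l - ab.2 r = C l r} ∩ {ab | ab.2 r₀ = 0})) := by
      ext ab
      simp only [hT, Set.mem_setOf_eq, Set.mem_inter_iff]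
    rw [this]
    exact h1.inter (h2.inter (h3.inter h4))
  -- T is compact
  have hTcompact : IsCompact T := by
    refine IsCompact.of_isClosed_subset (isCompact_Icc
      (a := ((fun _ => -(3*M), fun _ => -(2*M)) : (L → ℝ) × (R → ℝ)))
      (b := ((fun _ => M, fun _ => 2*M) : (L → ℝ) × (R → ℝ)))) hTclosed ?_
    intro ab hab
    obtain ⟨h1, h2⟩ := hTbdd ab hab
    rw [Set.mem_Icc, Prod.le_def, Prod.le_def, Pi.le_def, Pi.le_def, Pi.le_def, Pi.le_def]
    exact ⟨⟨fun l => (h1 l).1, fun r => (h2 r).1⟩, ⟨fun l => (h1 l).2, fun r => (h2 r).2⟩⟩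
  -- maximize D over T
  have hDcont : Continuous D := by
    apply Continuous.sub
    · exact continuous_finset_sum _ fun l _ => (continuous_apply l).comp continuous_fst
    · exact continuous_finset_sum _ fun r _ => (continuous_apply r).comp continuous_snd
  obtain ⟨ab, habT, hmax⟩ := hTcompact.exists_isMaxOn hTne hDcont.continuousOn
  obtain ⟨hfeas, hlt, hrt, hr₀⟩ := habT
  set nbr : L → Finset R := fun l => Finset.univ.filter (fun r => ab.1 l - ab.2 r = C l r)
    with hnbr
  -- Hall's condition via optimality
  have hall : ∀ A : Finset L, A.card ≤ (A.biUnion nbr).card := by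
    by_contra hcon
    push_neg at hcon
    obtain ⟨A, hA⟩ := hcon
    set TA := A.biUnion nbr with hTA
    have hAne : A.Nonempty := by
      rw [← Finset.card_pos]
      omega
    set NT : Finset (L × R) :=
      Finset.univ.filter (fun lr : L × R => ab.1 lr.1 - ab.2 lr.2 ≠ C lr.1 lr.2) with hNT
    by_cases hNTe : NT = ∅
    · -- all edges tight: TA = univ
      have htight : ∀ l r, ab.1 l - ab.2 r = C l r := by
        intro l r
        by_contra hne
        have : (l, r) ∈ NT := by
          rw [hNT]
          exact Finset.mem_filter.mpr ⟨Finset.mem_univ _, hne⟩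
        rw [hNTe] at this
        exact absurd this (Finset.notMem_empty _)
      obtain ⟨l₁, hl₁⟩ := hAne
      have huniv : (Finset.univ : Finset R) ⊆ TA := by
        intro r _
        exact Finset.mem_biUnion.mpr ⟨l₁, hl₁, by simp [hnbr, htight l₁ r]⟩
      have : Fintype.card R ≤ TA.card := by
        simpa using Finset.card_le_card huniv
      have hAcard : A.card ≤ Fintype.card L := Finset.card_le_univ A
      omega
    · have hNTne : NT.Nonempty := Finset.nonempty_of_ne_empty hNTe
      set ε : ℝ := NT.inf' hNTne (fun lr => C lr.1 lr.2 - (ab.1 lr.1 - ab.2 lr.2)) with hε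
      have hεpos : 0 < ε := by
        rw [hε, Finset.lt_inf'_iff]
        rintro ⟨l, r⟩ hlr
        rw [hNT, Finset.mem_filter] at hlr
        rcases lt_or_eq_of_le (hfeas l r) with h | h
        · simpa using h
        · exact absurd h hlr.2
      have hεle : ∀ l r, ab.1 l - ab.2 r ≠ C l r → ε ≤ C l r - (ab.1 l - ab.2 r) := by
        intro l r hne
        have hmem : (l, r) ∈ NT := by
          rw [hNT]; exact Finset.mem_filter.mpr ⟨Finset.mem_univ _, hne⟩
        rw [hε]
        exact Finset.inf'_le _ hmem
      set ab' : (L → ℝ) × (R → ℝ) :=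
        (fun l => ab.1 l + if l ∈ A then ε else 0,
         fun r => ab.2 r + if r ∈ TA then ε else 0) with hab'
      have hfeas' : ∀ l r, ab'.1 l - ab'.2 r ≤ C l r := by
        intro l r
        simp only [hab']
        by_cases hl : l ∈ A
        · by_cases hr : r ∈ TA
          · simp only [if_pos hl, if_pos hr]
            linarith [hfeas l r]
          · have hne : ab.1 l - ab.2 r ≠ C l r := by
              intro heq
              exact hr (Finset.mem_biUnion.mpr ⟨l, hl, by simp [hnbr, heq]⟩)
            have := hεle l r hne
            simp only [if_pos hl, if_neg hr]
            linarith
        · simp only [if_neg hl]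
          have : (0:ℝ) ≤ if r ∈ TA then ε else 0 := by positivity
          linarith [hfeas l r]
      obtain ⟨cd, hcdT, hcdD⟩ := key ab' hfeas'
      have hD' : D ab' = D ab + ε * A.card - ε * TA.card := by
        simp only [hD, hab']
        rw [Finset.sum_add_distrib, Finset.sum_add_distrib]
        have e1 : (∑ l, if l ∈ A then ε else 0) = ε * A.card := by
          rw [Finset.sum_ite_mem, Finset.univ_inter, Finset.sum_const, nsmul_eq_mul, mul_comm]
        have e2 : (∑ r, if r ∈ TA then ε else 0) = ε * TA.card := by
          rw [Finset.sum_ite_mem, Finset.univ_inter, Finset.sum_const, nsmul_eq_mul, mul_comm]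
        rw [e1, e2]
        ring
      have hgt : D ab < D ab' := by
        rw [hD']
        have : (TA.card : ℝ) < A.card := by exact_mod_cast hA
        nlinarith
      have := hmax hcdT
      simp only [Set.mem_setOf_eq] at this
      linarith
  obtain ⟨f, hfinj, hfmem⟩ := (Finset.all_card_le_biUnion_card_iff_exists_injective nbr).mp hall
  have hfbij : Function.Bijective f :=
    (Fintype.bijective_iff_injective_and_card f).mpr ⟨hfinj, hcard⟩
  refine ⟨ab.1, ab.2, Equiv.ofBijective f hfbij, hfeas, fun l => ?_⟩
  have := hfmem l
  simp only [hnbr, Finset.mem_filter] at this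
  exact this.2


lemma cross_frontier {Ω : Set R2} (hΩo : IsOpen Ω) {a b : R2} (ha : a ∈ Ω) (hb : b ∉ Ω) :
    ∃ f ∈ frontier Ω, f ∈ segment ℝ a b := by
  by_contra hcon
  push_neg at hcon
  have hdisj : Disjoint (frontier Ω) (segment ℝ a b) := by
    rw [Set.disjoint_left]
    intro f hf hfs
    exact hcon f hf hfs
  have hclopen : IsClopen ((Subtype.val : segment ℝ a b → R2) ⁻¹' Ω) :=
    isClopen_preimage_val hΩo hdisj
  haveI : PreconnectedSpace (segment ℝ a b) :=
    Subtype.preconnectedSpace (convex_segment a b).isPreconnected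
  have hne : ((Subtype.val : segment ℝ a b → R2) ⁻¹' Ω).Nonempty :=
    ⟨⟨a, left_mem_segment ℝ a b⟩, ha⟩
  have huniv := hclopen.eq_univ hne
  have hbmem : (⟨b, right_mem_segment ℝ a b⟩ : segment ℝ a b) ∈
      ((Subtype.val : segment ℝ a b → R2) ⁻¹' Ω) := by
    rw [huniv]; trivial
  exact hb hbmem

lemma infDist_le_dist_of_cross {Ω : Set R2} (hΩo : IsOpen Ω) {a b : R2}
    (ha : a ∈ Ω) (hb : b ∉ Ω) : infDist a (frontier Ω) ≤ dist a b := by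
  obtain ⟨f, hf, hfs⟩ := cross_frontier hΩo ha hb
  have h1 : infDist a (frontier Ω) ≤ dist a f := infDist_le_dist_of_mem hf
  have h2 : dist a f + dist f b = dist a b := dist_add_dist_of_mem_segment hfs
  have := dist_nonneg (x := f) (y := b)
  linarith

lemma mem_of_dist_lt_infDist {Ω : Set R2} (hΩo : IsOpen Ω) {p z : R2}
    (hp : p ∈ closure Ω) (h : dist p z < infDist p (frontier Ω)) : z ∈ Ω := by
  have hpΩ : p ∈ Ω := by
    by_contra hpn
    have : p ∈ frontier Ω := by
      rw [hΩo.frontier_eq]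
      exact ⟨hp, hpn⟩
    rw [infDist_zero_of_mem this] at h
    exact absurd h (not_lt.mpr dist_nonneg)
  by_contra hz
  exact absurd h (not_lt.mpr (infDist_le_dist_of_cross hΩo hpΩ hz))

lemma isCompact_seg (p q : R2) : IsCompact (segment ℝ p q) := by
  rw [segment_eq_image_lineMap]
  exact isCompact_Icc.image AffineMap.lineMap_continuous

/-- measure of the part of a segment within distance `d` of its first endpoint -/
lemma measure_seg_ball {p q : R2} {d : ℝ} (hd0 : 0 ≤ d) (hdle : d ≤ dist p q) :
    μH[1] (segment ℝ p q ∩ ball p d) = ENNReal.ofReal d := by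
  rcases eq_or_lt_of_le hd0 with h0 | hdpos
  · simp [← h0]
  have hpq : (0:ℝ) < dist p q := lt_of_lt_of_le hdpos hdle
  have himg : segment ℝ p q ∩ ball p d
      = (AffineMap.lineMap p q) '' (Ico (0:ℝ) (d / dist p q)) := by
    ext z
    constructor
    · rintro ⟨hzs, hzb⟩
      rw [segment_eq_image_lineMap] at hzs
      obtain ⟨t, ht, rfl⟩ := hzs
      refine ⟨t, ⟨ht.1, ?_⟩, rfl⟩
      rw [mem_ball] at hzb
      have hd : dist (AffineMap.lineMap p q t) p = |t| * dist p q := dist_lineMap_left p q t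
      rw [abs_of_nonneg ht.1] at hd
      rw [lt_div_iff₀ hpq]
      rw [hd] at hzb
      exact hzb
    · rintro ⟨t, ⟨ht0, htlt⟩, rfl⟩
      have htle : t * dist p q < d := (lt_div_iff₀ hpq).mp htlt
      constructor
      · rw [segment_eq_image_lineMap]
        refine ⟨t, ⟨ht0, ?_⟩, rfl⟩
        have : d / dist p q ≤ 1 := (div_le_one hpq).mpr hdle
        linarith
      · rw [mem_ball]
        have hd : dist (AffineMap.lineMap p q t) p = |t| * dist p q := dist_lineMap_left p q t
        rw [abs_of_nonneg ht0] at hd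
        rw [hd]
        exact htle
  rw [himg, hausdorffMeasure_lineMap_image, hausdorffMeasure_real, Real.volume_Ico, sub_zero,
    ENNReal.smul_def, smul_eq_mul]
  have h1 : ((nndist p q : ℝ≥0) : ℝ≥0∞) = ENNReal.ofReal (dist p q) := by
    rw [← edist_nndist, edist_dist]
  rw [h1, ← ENNReal.ofReal_mul dist_nonneg]
  congr 1
  field_simp

lemma hausdorff_seg_upper {p q : R2} (s : Set R2) :
    μH[1] (segment ℝ p q ∩ s) ≤ ENNReal.ofReal (dist p q) := by
  refine le_trans (measure_mono inter_subset_left) ?_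
  rw [hausdorffMeasure_segment, edist_dist]

lemma hausdorff_seg_lower {Ω : Set R2} (hΩo : IsOpen Ω) {p q : R2}
    (hp : p ∈ closure Ω) (hq : q ∈ closure Ω) :
    ENNReal.ofReal (min (dist p q) (infDist p (frontier Ω) + infDist q (frontier Ω)))
      ≤ μH[1] (segment ℝ p q ∩ Ω) := by
  by_cases hall : ∀ z ∈ segment ℝ p q, z = p ∨ z = q ∨ z ∈ Ω
  · have hsub : segment ℝ p q ⊆ (segment ℝ p q ∩ Ω) ∪ {p, q} := by
      intro z hz
      rcases hall z hz with h | h | h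
      · exact Or.inr (by simp [h])
      · exact Or.inr (by simp [h])
      · exact Or.inl ⟨hz, h⟩
    have hpt : ∀ a : R2, μH[1] ({a} : Set R2) = 0 := by
      intro a
      have : ({a} : Set R2) = segment ℝ a a := by rw [segment_same]
      rw [this, hausdorffMeasure_segment]
      simp
    have hpq0 : μH[1] ({p, q} : Set R2) = 0 := by
      have : ({p, q} : Set R2) = {p} ∪ {q} := by rfl
      refine le_antisymm ?_ zero_le
      rw [this]
      refine le_trans (measure_union_le _ _) ?_
      rw [hpt p, hpt q]
      simp
    have h1 : μH[1] (segment ℝ p q) ≤ μH[1] (segment ℝ p q ∩ Ω) := by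
      refine le_trans (measure_mono hsub) ?_
      refine le_trans (measure_union_le _ _) ?_
      rw [hpq0, add_zero]
    refine le_trans ?_ h1
    rw [hausdorffMeasure_segment, edist_dist]
    exact ENNReal.ofReal_le_ofReal (min_le_left _ _)
  · push_neg at hall
    obtain ⟨m, hmseg, hmp, hmq, hmΩ⟩ := hall
    set dp := infDist p (frontier Ω) with hdp
    set dq := infDist q (frontier Ω) with hdq
    have hdp0 : 0 ≤ dp := infDist_nonneg
    have hdq0 : 0 ≤ dq := infDist_nonneg
    have hdpm : dp ≤ dist p m := by
      by_cases hpΩ : p ∈ Ω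
      · exact infDist_le_dist_of_cross hΩo hpΩ hmΩ
      · have : p ∈ frontier Ω := by rw [hΩo.frontier_eq]; exact ⟨hp, hpΩ⟩
        rw [hdp, infDist_zero_of_mem this]
        exact dist_nonneg
    have hdqm : dq ≤ dist m q := by
      by_cases hqΩ : q ∈ Ω
      · rw [dist_comm]
        exact infDist_le_dist_of_cross hΩo hqΩ hmΩ
      · have : q ∈ frontier Ω := by rw [hΩo.frontier_eq]; exact ⟨hq, hqΩ⟩
        rw [hdq, infDist_zero_of_mem this]
        exact dist_nonneg
    have hsum : dist p m + dist m q = dist p q := dist_add_dist_of_mem_segment hmseg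
    have hdple : dp ≤ dist p q := by
      have := dist_nonneg (x := m) (y := q)
      linarith
    have hdqle : dq ≤ dist q p := by
      rw [dist_comm]
      have := dist_nonneg (x := p) (y := m)
      linarith
    set Ap := segment ℝ p q ∩ ball p dp with hAp
    set Aq := segment ℝ p q ∩ ball q dq with hAq
    have hApΩ : Ap ⊆ segment ℝ p q ∩ Ω := by
      rintro z ⟨hzs, hzb⟩
      rw [mem_ball] at hzb
      exact ⟨hzs, mem_of_dist_lt_infDist hΩo hp (by rw [dist_comm]; exact hzb)⟩
    have hAqΩ : Aq ⊆ segment ℝ p q ∩ Ω := by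
      rintro z ⟨hzs, hzb⟩
      rw [mem_ball] at hzb
      exact ⟨hzs, mem_of_dist_lt_infDist hΩo hq (by rw [dist_comm]; exact hzb)⟩
    have hdisj : Disjoint Ap Aq := by
      rw [Set.disjoint_left]
      rintro z ⟨hzs, hzb1⟩ ⟨-, hzb2⟩
      rw [mem_ball] at hzb1 hzb2
      have h1 := dist_triangle p z q
      have h2 : dist z q = dist q z := dist_comm z q
      have h3 : dist z p = dist p z := dist_comm z p
      linarith
    have hAqm : MeasurableSet Aq :=
      ((isCompact_seg p q).isClosed.measurableSet).inter measurableSet_ball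
    have hApmeas : μH[1] Ap = ENNReal.ofReal dp := measure_seg_ball hdp0 hdple
    have hAqmeas : μH[1] Aq = ENNReal.ofReal dq := by
      rw [hAq, segment_symm]
      exact measure_seg_ball hdq0 hdqle
    have hunion : μH[1] (Ap ∪ Aq) = ENNReal.ofReal dp + ENNReal.ofReal dq := by
      rw [measure_union hdisj hAqm, hApmeas, hAqmeas]
    have : ENNReal.ofReal (dp + dq) ≤ μH[1] (segment ℝ p q ∩ Ω) := by
      rw [ENNReal.ofReal_add hdp0 hdq0, ← hunion]
      exact measure_mono (Set.union_subset hApΩ hAqΩ)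
    refine le_trans ?_ this
    exact ENNReal.ofReal_le_ofReal (min_le_right _ _)


lemma lipschitzWith_inf' {ι : Type} [Fintype ι] [Nonempty ι] {K : ℝ≥0} {f : ι → R2 → ℝ}
    (hf : ∀ i, LipschitzWith K (f i)) :
    LipschitzWith K (fun z => Finset.univ.inf' Finset.univ_nonempty (fun i => f i z)) := by
  have main : ∀ (s : Finset ι) (hs : s.Nonempty),
      LipschitzWith K (fun z => s.inf' hs (fun i => f i z)) := by
    intro s hs
    induction hs using Finset.Nonempty.cons_induction with
    | singleton a => simpa using hf a
    | cons a s ha hs ih =>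
      have : (fun z => (Finset.cons a s ha).inf' (Finset.cons_nonempty ha) (fun i => f i z))
          = fun z => min (f a z) (s.inf' hs (fun i => f i z)) := by
        funext z
        rw [Finset.inf'_cons]
      rw [this]
      have := (hf a).min ih
      simpa using this
  exact main Finset.univ Finset.univ_nonempty

lemma lip_const_add_dist (c : ℝ) (a : R2) : LipschitzWith 2 (fun z => c + 2 * dist z a) := by
  apply LipschitzWith.of_dist_le_mul
  intro u v
  have h := abs_dist_sub_le u v a
  rw [Real.dist_eq]
  have : |c + 2 * dist u a - (c + 2 * dist v a)| = 2 * |dist u a - dist v a| := by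
    rw [show c + 2 * dist u a - (c + 2 * dist v a) = 2 * (dist u a - dist v a) by ring,
      abs_mul]
    norm_num
  rw [this]
  push_cast
  nlinarith [abs_nonneg (dist u a - dist v a)]

lemma lip_two_infDist (F : Set R2) : LipschitzWith 2 (fun z => min 1 (2 * infDist z F)) := by
  have h1 : LipschitzWith 2 (fun z => 2 * infDist z F) := by
    apply LipschitzWith.of_dist_le_mul
    intro u v
    have h := (lipschitz_infDist_pt F).dist_le_mul u v
    rw [Real.dist_eq] at h ⊢
    have : |2 * infDist u F - 2 * infDist v F| = 2 * |infDist u F - infDist v F| := by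
      rw [show 2 * infDist u F - 2 * infDist v F = 2 * (infDist u F - infDist v F) by ring,
        abs_mul]
      norm_num
    rw [this]
    push_cast
    push_cast at h
    nlinarith [abs_nonneg (infDist u F - infDist v F)]
  have := (LipschitzWith.const (1:ℝ)).min h1
  simpa using this

lemma frontier_nonempty_of_bounded {Ω : Set R2} (hΩo : IsOpen Ω)
    (hΩb : Bornology.IsBounded Ω) (hne : Ω.Nonempty) : (frontier Ω).Nonempty := by
  obtain ⟨a, ha⟩ := hne
  obtain ⟨r, hr⟩ := (isBounded_iff_subset_ball (0:R2)).mp hΩb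
  set b : R2 := EuclideanSpace.single (0 : Fin 2) (|r|+1) with hb
  have hbn : b ∉ Ω := by
    intro hbΩ
    have := hr hbΩ
    rw [mem_ball, dist_zero_right] at this
    rw [hb, EuclideanSpace.norm_single, Real.norm_eq_abs] at this
    have h1 : r ≤ |r| := le_abs_self r
    have h2 : |(|r| + 1)| = |r| + 1 := abs_of_nonneg (by positivity)
    rw [h2] at this
    linarith
  obtain ⟨f, hf, -⟩ := cross_frontier hΩo ha hbn
  exact ⟨f, hf⟩

lemma abs_le_two_infDist {Ω : Set R2} (hF : (frontier Ω).Nonempty) {ψ : R2 → ℝ}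
    (hlip : LipschitzOnWith 2 ψ (closure Ω)) (h0 : ∀ p ∈ frontier Ω, ψ p = 0) {z : R2}
    (hz : z ∈ closure Ω) : |ψ z| ≤ 2 * infDist z (frontier Ω) := by
  obtain ⟨c, hcF, hc⟩ := isClosed_frontier.exists_infDist_eq_dist hF z
  have hcc : c ∈ closure Ω := frontier_subset_closure hcF
  have h := hlip.dist_le_mul z hz c hcc
  rw [Real.dist_eq, h0 c hcF, sub_zero] at h
  rw [hc]
  push_cast at h
  exact h

lemma exists_phi (Ω : Set R2) {ι : Type} [Fintype ι] (b : ι → R2) (w : ι → ℝ)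
    (hw : ∀ i, -(min 1 (2 * infDist (b i) (frontier Ω))) ≤ w i) :
    ∃ φ : R2 → ℝ, LipschitzWith 2 φ ∧ (∀ p ∈ frontier Ω, φ p = 0) ∧
      (∀ z, |φ z| ≤ min 1 (2 * infDist z (frontier Ω))) ∧
      (∀ i, φ (b i) ≤ w i) ∧
      (∀ z c, c ≤ min 1 (2 * infDist z (frontier Ω)) →
        (∀ i, c ≤ w i + 2 * dist z (b i)) → c ≤ φ z) := by
  classical
  set F := frontier Ω with hF
  set mt : R2 → ℝ := fun z => min 1 (2 * infDist z F) with hmt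
  have hmt0 : ∀ z, 0 ≤ mt z :=
    fun z => le_min zero_le_one (mul_nonneg (by norm_num) infDist_nonneg)
  have hmt1 : ∀ z, mt z ≤ 1 := fun z => min_le_left _ _
  set G : Option ι → R2 → ℝ :=
    fun o => Option.elim o (fun _ => (1:ℝ)) (fun i z => w i + 2 * dist z (b i)) with hG
  set g : R2 → ℝ := fun z => Finset.univ.inf' Finset.univ_nonempty (fun o => G o z) with hg
  have hglip : LipschitzWith 2 g := by
    apply lipschitzWith_inf'
    rintro (_ | i)
    · exact (LipschitzWith.const (1:ℝ)).weaken zero_le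
    · exact lip_const_add_dist (w i) (b i)
  have hgle : ∀ z (o : Option ι), g z ≤ G o z :=
    fun z o => Finset.inf'_le _ (Finset.mem_univ o)
  have hglb : ∀ z c, (∀ o : Option ι, c ≤ G o z) → c ≤ g z :=
    fun z c h => Finset.le_inf' _ _ (fun o _ => h o)
  set φ : R2 → ℝ := fun z => max (-(mt z)) (min (mt z) (g z)) with hφ
  have hmtlip : LipschitzWith 2 mt := lip_two_infDist F
  refine ⟨φ, ?_, ?_, ?_, ?_, ?_⟩
  · have := (hmtlip.neg).max (hmtlip.min hglip)
    simpa using this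
  · intro p hp
    have h0 : mt p = 0 := by
      rw [hmt]
      have hz : infDist p F = 0 := infDist_zero_of_mem (by rw [hF]; exact hp)
      simp [hz]
    simp only [hφ, h0, neg_zero]
    exact max_eq_left (le_trans (min_le_left _ _) le_rfl)
  · intro z
    rw [abs_le]
    constructor
    · exact le_max_left _ _
    · exact max_le (le_trans (neg_nonpos.mpr (hmt0 z)) (hmt0 z)) (min_le_left _ _)
  · intro i
    refine max_le ?_ ?_
    · exact hw i
    · refine le_trans (min_le_right _ _) ?_
      have := hgle (b i) (some i)
      simpa [hG] using this
  · intro z c hc1 hc2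
    refine le_max_of_le_right (le_min hc1 (hglb z c ?_))
    rintro (_ | i)
    · exact le_trans hc1 (hmt1 z)
    · exact hc2 i

lemma weak_duality {Ω : Set R2} (hΩo : IsOpen Ω) (hF : (frontier Ω).Nonempty)
    {n : ℕ} {x y : Fin n → R2} (hPf : SatisfiesPf Ω x y)
    {ψ : R2 → ℝ} (hψ : FlatAdmissible Ω (frontier Ω) 2 ψ)
    (ID : Finset (Fin n)) (τ : Fin n → Fin n) (hinj : Set.InjOn τ ↑ID) :
    ENNReal.ofReal (∑ k, (ψ (x k) - ψ (y k))) ≤ energy Ω x y ID τ := by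
  classical
  obtain ⟨hlip, hzero, hbdd⟩ := hψ
  have hfr : ∀ z, z ∈ frontier Ω → z ∉ Ω := fun z hz => by
    rw [hΩo.frontier_eq] at hz; exact hz.2
  have hxcl : ∀ k, x k ∈ closure Ω := by
    intro k
    rcases hPf.1 k with ⟨h, -, -⟩ | ⟨-, h, -⟩
    · exact subset_closure h
    · exact frontier_subset_closure h
  have hycl : ∀ k, y k ∈ closure Ω := by
    intro k
    rcases hPf.1 k with ⟨-, h, -⟩ | ⟨h, -, -⟩
    · exact frontier_subset_closure h
    · exact subset_closure h
  have hxfr : ∀ k, x k ∉ Ω → x k ∈ frontier Ω := by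
    intro k hk
    rcases hPf.1 k with ⟨h, -, -⟩ | ⟨-, h, -⟩
    · exact absurd h hk
    · exact h
  have hyfr : ∀ k, y k ∉ Ω → y k ∈ frontier Ω := by
    intro k hk
    rcases hPf.1 k with ⟨-, h, -⟩ | ⟨h, -, -⟩
    · exact h
    · exact absurd h hk
  have habs : ∀ z ∈ closure Ω, |ψ z| ≤ 2 * infDist z (frontier Ω) :=
    fun z hz => abs_le_two_infDist hF hlip hzero hz
  -- pairwise bound
  have hdd : ∀ a b : R2, a ∈ closure Ω → b ∈ closure Ω →
      ψ a - ψ b ≤ 2 * min (dist a b) (infDist a (frontier Ω) + infDist b (frontier Ω)) := by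
    intro a b ha hb
    have h1 : ψ a - ψ b ≤ 2 * dist a b := by
      have := hlip.dist_le_mul a ha b hb
      rw [Real.dist_eq] at this
      push_cast at this
      calc ψ a - ψ b ≤ |ψ a - ψ b| := le_abs_self _
        _ ≤ 2 * dist a b := this
    have h2 : ψ a - ψ b ≤ 2 * (infDist a (frontier Ω) + infDist b (frontier Ω)) := by
      have ha' := habs a ha
      have hb' := habs b hb
      have h3 : ψ a ≤ |ψ a| := le_abs_self _
      have h4 : -ψ b ≤ |ψ b| := neg_le_abs _
      linarith
    rcases le_total (dist a b) (infDist a (frontier Ω) + infDist b (frontier Ω)) with h | h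
    · rw [min_eq_left h]; exact h1
    · rw [min_eq_right h]; exact h2
  -- split the sum
  have hsplit : (∑ k, (ψ (x k) - ψ (y k)))
      = (∑ k ∈ ID, (ψ (x k) - ψ (y (τ k))))
        + (∑ k ∈ IDᶜ, ψ (x k))
        - (∑ j ∈ Finset.univ \ ID.image τ, ψ (y j)) := by
    have hx1 : (∑ k, ψ (x k)) = (∑ k ∈ ID, ψ (x k)) + ∑ k ∈ IDᶜ, ψ (x k) :=
      (Finset.sum_add_sum_compl ID _).symm
    have hy1 : (∑ k, ψ (y k))
        = (∑ j ∈ Finset.univ \ ID.image τ, ψ (y j)) + ∑ j ∈ ID.image τ, ψ (y j) :=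
      (Finset.sum_sdiff (Finset.subset_univ _)).symm
    have hy2 : (∑ j ∈ ID.image τ, ψ (y j)) = ∑ k ∈ ID, ψ (y (τ k)) :=
      Finset.sum_image (fun a ha b hb hab => hinj ha hb hab)
    rw [Finset.sum_sub_distrib, hx1, hy1, hy2, Finset.sum_sub_distrib]
    ring
  -- bound the three parts
  have hs1 : (∑ k ∈ ID, (ψ (x k) - ψ (y (τ k))))
      ≤ ∑ k ∈ ID, 2 * min (dist (x k) (y (τ k)))
          (infDist (x k) (frontier Ω) + infDist (y (τ k)) (frontier Ω)) :=
    Finset.sum_le_sum fun k _ => hdd (x k) (y (τ k)) (hxcl k) (hycl (τ k))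
  have hs2 : (∑ k ∈ IDᶜ, ψ (x k)) ≤ ((IDᶜ.filter fun k => x k ∈ Ω).card : ℝ) := by
    rw [← Finset.sum_filter_add_sum_filter_not IDᶜ (fun k => x k ∈ Ω)]
    have h1 : (∑ k ∈ IDᶜ.filter fun k => x k ∈ Ω, ψ (x k))
        ≤ ((IDᶜ.filter fun k => x k ∈ Ω).card : ℝ) := by
      have := Finset.sum_le_card_nsmul (IDᶜ.filter fun k => x k ∈ Ω) (fun k => ψ (x k)) 1
        (fun k _ => (abs_le.mp (hbdd (x k) (hxcl k))).2)
      simpa using this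
    have h2 : (∑ k ∈ IDᶜ.filter fun k => ¬ x k ∈ Ω, ψ (x k)) = 0 := by
      apply Finset.sum_eq_zero
      intro k hk
      exact hzero _ (hxfr k (Finset.mem_filter.mp hk).2)
    linarith
  have hs3 : -(∑ j ∈ Finset.univ \ ID.image τ, ψ (y j))
      ≤ (((Finset.univ \ ID.image τ).filter fun j => y j ∈ Ω).card : ℝ) := by
    rw [← Finset.sum_filter_add_sum_filter_not (Finset.univ \ ID.image τ) (fun j => y j ∈ Ω)]
    have h1 : -(∑ j ∈ (Finset.univ \ ID.image τ).filter fun j => y j ∈ Ω, ψ (y j))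
        ≤ (((Finset.univ \ ID.image τ).filter fun j => y j ∈ Ω).card : ℝ) := by
      rw [← Finset.sum_neg_distrib]
      have := Finset.sum_le_card_nsmul ((Finset.univ \ ID.image τ).filter fun j => y j ∈ Ω)
        (fun j => -ψ (y j)) 1
        (fun j _ => by
          have h := (abs_le.mp (hbdd (y j) (hycl j))).1
          show -ψ (y j) ≤ 1
          linarith)
      simpa using this
    have h2 : (∑ j ∈ (Finset.univ \ ID.image τ).filter fun j => ¬ y j ∈ Ω, ψ (y j)) = 0 := by
      apply Finset.sum_eq_zero
      intro j hj
      exact hzero _ (hyfr j (Finset.mem_filter.mp hj).2)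
    linarith
  -- now the ENNReal comparison
  have hterm : ∀ k ∈ ID,
      ENNReal.ofReal (2 * min (dist (x k) (y (τ k)))
          (infDist (x k) (frontier Ω) + infDist (y (τ k)) (frontier Ω)))
        ≤ 2 * μH[1] (segment ℝ (y (τ k)) (x k) ∩ Ω) := by
    intro k _
    have hlow := hausdorff_seg_lower hΩo (hycl (τ k)) (hxcl k)
    rw [ENNReal.ofReal_mul (by norm_num : (0:ℝ) ≤ 2)]
    have h2 : ENNReal.ofReal (2:ℝ) = 2 := by norm_num
    rw [h2]
    refine mul_le_mul_right ?_ 2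
    refine le_trans (le_of_eq ?_) hlow
    rw [dist_comm, add_comm]
  have hmin0 : ∀ k, 0 ≤ 2 * min (dist (x k) (y (τ k)))
      (infDist (x k) (frontier Ω) + infDist (y (τ k)) (frontier Ω)) := by
    intro k
    have h1 : (0:ℝ) ≤ dist (x k) (y (τ k)) := dist_nonneg
    have h2 : (0:ℝ) ≤ infDist (x k) (frontier Ω) + infDist (y (τ k)) (frontier Ω) := by
      have := infDist_nonneg (x := x k) (s := frontier Ω)
      have := infDist_nonneg (x := y (τ k)) (s := frontier Ω)
      linarith
    have := le_min h1 h2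
    linarith
  calc ENNReal.ofReal (∑ k, (ψ (x k) - ψ (y k)))
      ≤ ENNReal.ofReal (((IDᶜ.filter fun k => x k ∈ Ω).card : ℝ)
          + (((Finset.univ \ ID.image τ).filter fun j => y j ∈ Ω).card : ℝ)
          + ∑ k ∈ ID, 2 * min (dist (x k) (y (τ k)))
              (infDist (x k) (frontier Ω) + infDist (y (τ k)) (frontier Ω))) := by
        apply ENNReal.ofReal_le_ofReal
        rw [hsplit]
        linarith
    _ ≤ energy Ω x y ID τ := by
        rw [ENNReal.ofReal_add (by positivity) (Finset.sum_nonneg fun k _ => hmin0 k),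
          ENNReal.ofReal_add (by positivity) (by positivity)]
        unfold energy
        rw [ENNReal.ofReal_natCast, ENNReal.ofReal_natCast]
        refine add_le_add (add_le_add le_rfl le_rfl) ?_
        rw [ENNReal.ofReal_sum_of_nonneg (fun k _ => hmin0 k), Finset.mul_sum]
        exact Finset.sum_le_sum hterm

set_option maxHeartbeats 2000000 in
lemma key_construction {Ω : Set R2} (hΩo : IsOpen Ω) (hF : (frontier Ω).Nonempty)
    {n : ℕ} {x y : Fin n → R2} (hPf : SatisfiesPf Ω x y) :
    ∃ (ID : Finset (Fin n)) (τ : Fin n → Fin n), Set.InjOn τ ↑ID ∧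
      ∃ φ : R2 → ℝ, FlatAdmissible Ω (frontier Ω) 2 φ ∧
        energy Ω x y ID τ ≤ ENNReal.ofReal (∑ k, (φ (x k) - φ (y k))) := by
  classical
  have hfr : ∀ z, z ∈ frontier Ω → z ∉ Ω := fun z hz => by
    rw [hΩo.frontier_eq] at hz; exact hz.2
  have hPf1 : ∀ k, x k ∈ Ω →
      y k ∈ frontier Ω ∧ dist (x k) (y k) = infDist (x k) (frontier Ω) := by
    intro k hk
    rcases hPf.1 k with ⟨-, h1, h2⟩ | ⟨-, h1, -⟩
    · exact ⟨h1, h2⟩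
    · exact absurd hk (hfr _ h1)
  have hPf2 : ∀ k, y k ∈ Ω →
      x k ∈ frontier Ω ∧ dist (x k) (y k) = infDist (y k) (frontier Ω) := by
    intro k hk
    rcases hPf.1 k with ⟨-, h1, -⟩ | ⟨-, h1, h2⟩
    · exact absurd hk (hfr _ h1)
    · exact ⟨h1, h2⟩
  have hxy : ∀ k, x k ∈ Ω → y k ∉ Ω := fun k hk => hfr _ (hPf1 k hk).1
  have hyx : ∀ k, y k ∈ Ω → x k ∉ Ω := fun k hk => hfr _ (hPf2 k hk).1
  have hxfr : ∀ k, x k ∉ Ω → x k ∈ frontier Ω := by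
    intro k hk
    rcases hPf.1 k with ⟨h, -, -⟩ | ⟨-, h, -⟩
    · exact absurd h hk
    · exact h
  have hyfr : ∀ k, y k ∉ Ω → y k ∈ frontier Ω := by
    intro k hk
    rcases hPf.1 k with ⟨-, h, -⟩ | ⟨h, -, -⟩
    · exact h
    · exact absurd h hk
  set m : R2 → ℝ := fun z => min 1 (2 * infDist z (frontier Ω)) with hm
  have hmz : ∀ z, min 1 (2 * infDist z (frontier Ω)) = m z := fun z => by rw [hm]
  have hm0 : ∀ z, 0 ≤ m z := fun z => by
    rw [hm]
    exact le_min zero_le_one (mul_nonneg (by norm_num) infDist_nonneg)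
  have hm1 : ∀ z, m z ≤ 1 := fun z => by rw [hm]; exact min_le_left _ _
  -- index sets
  set P : Finset (Fin n) := Finset.univ.filter (fun k => x k ∈ Ω) with hP
  set N : Finset (Fin n) := Finset.univ.filter (fun k => y k ∈ Ω) with hN
  have hPmem : ∀ k, k ∈ P ↔ x k ∈ Ω := fun k => by rw [hP]; simp
  have hNmem : ∀ k, k ∈ N ↔ y k ∈ Ω := fun k => by rw [hN]; simp
  haveI hneL : Nonempty (↥P ⊕ (↥N ⊕ Unit)) := ⟨Sum.inr (Sum.inr ())⟩
  haveI hneR : Nonempty (↥N ⊕ (↥P ⊕ Unit)) := ⟨Sum.inr (Sum.inr ())⟩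
  set CC : (↥P ⊕ (↥N ⊕ Unit)) → (↥N ⊕ (↥P ⊕ Unit)) → ℝ := fun l r =>
    Sum.elim
      (fun (p : ↥P) => Sum.elim (fun (q : ↥N) => min (2 * dist (x ↑p) (y ↑q)) (m (x ↑p) + m (y ↑q)))
        (fun (_ : ↥P ⊕ Unit) => m (x ↑p)) r)
      (fun (_ : ↥N ⊕ Unit) => Sum.elim (fun (q : ↥N) => m (y ↑q)) (fun (_ : ↥P ⊕ Unit) => (0:ℝ)) r) l with hCC
  have hCC_ll : ∀ p q, CC (Sum.inl p) (Sum.inl q)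
      = min (2 * dist (x ↑p) (y ↑q)) (m (x ↑p) + m (y ↑q)) := by
    intro p q; simp only [hCC, Sum.elim_inl, Sum.elim_inr]
  have hCC_lr : ∀ p dr, CC (Sum.inl p) (Sum.inr dr) = m (x ↑p) := by
    intro p dr; simp only [hCC, Sum.elim_inl, Sum.elim_inr]
  have hCC_rl : ∀ dl q, CC (Sum.inr dl) (Sum.inl q) = m (y ↑q) := by
    intro dl q; simp only [hCC, Sum.elim_inl, Sum.elim_inr]
  have hCC_rr : ∀ dl dr, CC (Sum.inr dl) (Sum.inr dr) = 0 := by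
    intro dl dr; simp only [hCC, Sum.elim_inl, Sum.elim_inr]
  have hcard : Fintype.card (↥P ⊕ (↥N ⊕ Unit)) = Fintype.card (↥N ⊕ (↥P ⊕ Unit)) := by
    simp only [Fintype.card_sum, Fintype.card_coe, Fintype.card_unit]
    omega
  obtain ⟨α, β, π, hfeas, htight⟩ := egervary hcard CC
  -- the tightened dual on the right
  set bβ : (↥N ⊕ (↥P ⊕ Unit)) → ℝ := fun r => Finset.univ.sup' Finset.univ_nonempty
    (fun l => α l - CC l r) with hbβ
  have hbβ_ge : ∀ l r, α l - CC l r ≤ bβ r := fun l r => by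
    rw [hbβ]; exact Finset.le_sup' (fun l => α l - CC l r) (Finset.mem_univ l)
  have hbβ_ub : ∀ r c, (∀ l, α l - CC l r ≤ c) → bβ r ≤ c := by
    intro r c h
    rw [hbβ]
    exact Finset.sup'_le _ _ (fun l _ => h l)
  have hbβ_le : ∀ r, bβ r ≤ β r := fun r => hbβ_ub r (β r) (fun l => by linarith [hfeas l r])
  set s : ℝ := bβ (Sum.inr (Sum.inr ())) with hs
  have hCCdr : ∀ l (dr dr' : ↥P ⊕ Unit), CC l (Sum.inr dr) = CC l (Sum.inr dr') := by
    intro l dr dr'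
    rcases l with p | dl
    · rw [hCC_lr, hCC_lr]
    · rw [hCC_rr, hCC_rr]
  have hbβ_dr : ∀ dr : ↥P ⊕ Unit, bβ (Sum.inr dr) = s := by
    intro dr
    apply le_antisymm
    · apply hbβ_ub
      intro l
      rw [hCCdr l dr (Sum.inr ())]
      exact hbβ_ge l _
    · rw [hs]
      apply hbβ_ub
      intro l
      rw [hCCdr l (Sum.inr ()) dr]
      exact hbβ_ge l _
  set w : ↥N → ℝ := fun q => bβ (Sum.inl q) - s with hwdef
  set v : ↥P → ℝ := fun p => α (Sum.inl p) - s with hvdef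
  have hv_le : ∀ p, v p ≤ m (x ↑p) := by
    intro p
    have h1 := hbβ_ge (Sum.inl p) (Sum.inr (Sum.inr ()))
    rw [hCC_lr] at h1
    have h2 : bβ (Sum.inr (Sum.inr ())) = s := hbβ_dr _
    simp only [hvdef]
    linarith
  have hw_lb : ∀ q : ↥N, -(m (y ↑q)) ≤ w q := by
    intro q
    have hkey : bβ (Sum.inr (Sum.inr ())) ≤ bβ (Sum.inl q) + m (y ↑q) := by
      apply hbβ_ub
      intro l
      rcases l with p | dl
      · have h1 := hbβ_ge (Sum.inl p) (Sum.inl q)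
        have h2 : CC (Sum.inl p) (Sum.inl q) ≤ m (x ↑p) + m (y ↑q) := by
          rw [hCC_ll]; exact min_le_right _ _
        rw [hCC_lr]
        linarith
      · have h1 := hbβ_ge (Sum.inr dl) (Sum.inl q)
        rw [hCC_rl] at h1
        rw [hCC_rr]
        linarith
    have hs' : s = bβ (Sum.inr (Sum.inr ())) := hs
    simp only [hwdef]
    linarith
  have hvw : ∀ p q, v p - w q ≤ 2 * dist (x ↑p) (y ↑q) := by
    intro p q
    have h1 := hbβ_ge (Sum.inl p) (Sum.inl q)
    have h2 : CC (Sum.inl p) (Sum.inl q) ≤ 2 * dist (x ↑p) (y ↑q) := by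
      rw [hCC_ll]; exact min_le_left _ _
    simp only [hvdef, hwdef]
    linarith
  -- the optimal test function
  obtain ⟨φ, hφlip, hφ0, hφbdd, hφy, hφlb⟩ := exists_phi Ω (fun q : ↥N => y ↑q) w
    (fun q => by rw [hmz]; exact hw_lb q)
  have hφx : ∀ p : ↥P, v p ≤ φ (x ↑p) := by
    intro p
    apply hφlb
    · rw [hmz]; exact hv_le p
    · intro q
      have := hvw p q
      linarith
  have hφadm : FlatAdmissible Ω (frontier Ω) 2 φ :=
    ⟨hφlip.lipschitzOnWith, hφ0, fun z hz => le_trans (hφbdd z) (min_le_left _ _)⟩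
  -- matching data extracted from the tight bijection
  set qof : ↥P → Option ↥N := fun p =>
    Sum.elim (fun (q : ↥N) => if 2 * dist (x ↑p) (y ↑q) ≤ m (x ↑p) + m (y ↑q) then some q
      else none) (fun _ => none) (π (Sum.inl p)) with hqof
  set pof : ↥N → Option ↥P := fun q =>
    Sum.elim (fun (p : ↥P) => if 2 * dist (x ↑p) (y ↑q) ≤ m (x ↑p) + m (y ↑q) then some p
      else none) (fun _ => none) (π.symm (Sum.inl q)) with hpof
  have hlink : ∀ p q, qof p = some q →
      pof q = some p ∧ π (Sum.inl p) = Sum.inl q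
        ∧ 2 * dist (x ↑p) (y ↑q) ≤ m (x ↑p) + m (y ↑q) := by
    intro p q h
    simp only [hqof] at h
    rcases hπ : π (Sum.inl p) with q' | d
    · rw [hπ] at h
      simp only [Sum.elim_inl] at h
      by_cases hsh : 2 * dist (x ↑p) (y ↑q') ≤ m (x ↑p) + m (y ↑q')
      · rw [if_pos hsh] at h
        have hqq : q' = q := by simpa using h
        rw [← hqq]
        refine ⟨?_, rfl, hsh⟩
        have hsym : π.symm (Sum.inl q') = Sum.inl p := by rw [← hπ, Equiv.symm_apply_apply]
        simp only [hpof]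
        rw [hsym]
        simp only [Sum.elim_inl]
        rw [if_pos hsh]
      · rw [if_neg hsh] at h
        exact absurd h (by simp)
    · rw [hπ] at h
      simp at h
  have hlink2 : ∀ p q, pof q = some p → qof p = some q := by
    intro p q h
    simp only [hpof] at h
    rcases hπ : π.symm (Sum.inl q) with p' | d
    · rw [hπ] at h
      simp only [Sum.elim_inl] at h
      by_cases hsh : 2 * dist (x ↑p') (y ↑q) ≤ m (x ↑p') + m (y ↑q)
      · rw [if_pos hsh] at h
        have hpp : p' = p := by simpa using h
        rw [← hpp]
        have hπ2 : π (Sum.inl p') = Sum.inl q := by rw [← hπ, Equiv.apply_symm_apply]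
        simp only [hqof]
        rw [hπ2]
        simp only [Sum.elim_inl]
        rw [if_pos hsh]
      · rw [if_neg hsh] at h
        exact absurd h (by simp)
    · rw [hπ] at h
      simp at h
  -- lift to `Fin n`
  set Qof : Fin n → Option (Fin n) := fun k =>
    if hx : x k ∈ Ω then (qof ⟨k, (hPmem k).mpr hx⟩).map Subtype.val else none with hQof
  set Pof : Fin n → Option (Fin n) := fun k =>
    if hy : y k ∈ Ω then (pof ⟨k, (hNmem k).mpr hy⟩).map Subtype.val else none with hPofd
  set τ' : Fin n → Fin n := fun k => (Qof k).getD k with hτ'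
  set ID : Finset (Fin n) := Finset.univ.filter (fun k =>
    (Qof k).isSome = true ∨ (x k ∈ Ω ∧ 2 * infDist (x k) (frontier Ω) ≤ 1)
      ∨ (y k ∈ Ω ∧ Pof k = none ∧ 2 * infDist (y k) (frontier Ω) ≤ 1)) with hID
  have hIDmem : ∀ k, k ∈ ID ↔
      ((Qof k).isSome = true ∨ (x k ∈ Ω ∧ 2 * infDist (x k) (frontier Ω) ≤ 1)
        ∨ (y k ∈ Ω ∧ Pof k = none ∧ 2 * infDist (y k) (frontier Ω) ≤ 1)) := by
    intro k; rw [hID]; simp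
  have hQofP : ∀ (p : ↥P), Qof ↑p = (qof p).map Subtype.val := by
    intro p
    have hxp : x ↑p ∈ Ω := (hPmem ↑p).mp p.2
    simp only [hQof]
    rw [dif_pos hxp, Subtype.coe_eta]
  have hQofnone : ∀ k, x k ∉ Ω → Qof k = none := by
    intro k hk; simp only [hQof]; rw [dif_neg hk]
  have hPofN : ∀ (q : ↥N), Pof ↑q = (pof q).map Subtype.val := by
    intro q
    have hyq : y ↑q ∈ Ω := (hNmem ↑q).mp q.2
    simp only [hPofd]
    rw [dif_pos hyq, Subtype.coe_eta]
  have hτ'eq : ∀ k, τ' k = (Qof k).getD k := fun k => by simp only [hτ']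
  have hτ'none : ∀ k, Qof k = none → τ' k = k := fun k h => by rw [hτ'eq, h]; rfl
  have hIDp_some : ∀ (p : ↥P) (q : ↥N), qof p = some q → (↑p ∈ ID ∧ τ' ↑p = ↑q) := by
    intro p q h
    have h1 : Qof ↑p = some ↑q := by rw [hQofP, h]; rfl
    constructor
    · rw [hIDmem]; left; rw [h1]; rfl
    · rw [hτ'eq, h1]; rfl
  have hIDp_short : ∀ k, x k ∈ Ω → 2 * infDist (x k) (frontier Ω) ≤ 1 → k ∈ ID := by
    intro k hx hsh; rw [hIDmem]; exact Or.inr (Or.inl ⟨hx, hsh⟩)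
  have hIDp_notin : ∀ (p : ↥P), qof p = none →
      ¬ (2 * infDist (x ↑p) (frontier Ω) ≤ 1) → ↑p ∉ ID := by
    intro p h hsh hmem
    rw [hIDmem] at hmem
    rcases hmem with h1 | h2 | h3
    · rw [hQofP, h] at h1; simp at h1
    · exact hsh h2.2
    · exact (hxy _ ((hPmem _).mp p.2)) h3.1
  have hIDq_in : ∀ (q : ↥N), pof q = none → 2 * infDist (y ↑q) (frontier Ω) ≤ 1 → ↑q ∈ ID := by
    intro q h hsh
    rw [hIDmem]
    refine Or.inr (Or.inr ⟨(hNmem _).mp q.2, ?_, hsh⟩)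
    rw [hPofN, h]; rfl
  have hIDq_notin1 : ∀ (q : ↥N) (p : ↥P), pof q = some p → ↑q ∉ ID := by
    intro q p h hmem
    have hyq : y ↑q ∈ Ω := (hNmem _).mp q.2
    have hxq : x ↑q ∉ Ω := hyx _ hyq
    rw [hIDmem] at hmem
    rcases hmem with h1 | h2 | h3
    · rw [hQofnone _ hxq] at h1; simp at h1
    · exact hxq h2.1
    · rw [hPofN, h] at h3; simp at h3
  have hIDq_notin2 : ∀ (q : ↥N), pof q = none →
      ¬ (2 * infDist (y ↑q) (frontier Ω) ≤ 1) → ↑q ∉ ID := by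
    intro q h hsh hmem
    have hxq : x ↑q ∉ Ω := hyx _ ((hNmem _).mp q.2)
    rw [hIDmem] at hmem
    rcases hmem with h1 | h2 | h3
    · rw [hQofnone _ hxq] at h1; simp at h1
    · exact hxq h2.1
    · exact hsh h3.2.2
  have hτ'N : ∀ (q : ↥N), τ' ↑q = ↑q :=
    fun q => hτ'none _ (hQofnone _ (hyx _ ((hNmem _).mp q.2)))
  have hIDother : ∀ k, x k ∉ Ω → y k ∉ Ω → k ∉ ID := by
    intro k hx hy hmem
    rw [hIDmem] at hmem
    rcases hmem with h1 | h2 | h3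
    · rw [hQofnone _ hx] at h1; simp at h1
    · exact hx h2.1
    · exact hy h3.1
  have hQsome : ∀ k j, Qof k = some j →
      ∃ (p : ↥P) (q : ↥N), ↑p = k ∧ ↑q = j ∧ qof p = some q := by
    intro k j h
    by_cases hx : x k ∈ Ω
    · have hp : Qof k = (qof ⟨k, (hPmem k).mpr hx⟩).map Subtype.val := by
        simp only [hQof]; rw [dif_pos hx]
      rw [hp] at h
      rcases hq : qof ⟨k, (hPmem k).mpr hx⟩ with _ | q
      · rw [hq] at h; simp at h
      · rw [hq] at h
        simp only [Option.map_some] at h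
        have : (↑q : Fin n) = j := by simpa using h
        exact ⟨⟨k, (hPmem k).mpr hx⟩, q, rfl, this, hq⟩
    · rw [hQofnone _ hx] at h; simp at h
  -- injectivity of τ' on ID
  have hinjON : Set.InjOn τ' ↑ID := by
    intro k1 hk1 k2 hk2 heq
    rw [Finset.mem_coe] at hk1 hk2
    rcases hq1 : Qof k1 with _ | j1 <;> rcases hq2 : Qof k2 with _ | j2
    · rw [hτ'none _ hq1, hτ'none _ hq2] at heq; exact heq
    · -- k1 unmatched, k2 matched
      obtain ⟨p2, q2, hpk2, hqj2, hqof2⟩ := hQsome k2 j2 hq2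
      rw [hτ'none _ hq1] at heq
      rw [hτ'eq, hq2] at heq
      simp only [Option.getD_some] at heq
      have hkq : k1 = (↑q2 : Fin n) := heq.trans hqj2.symm
      subst hkq
      exact absurd hk1 (hIDq_notin1 q2 p2 (hlink p2 q2 hqof2).1)
    · obtain ⟨p1, q1, hpk1, hqj1, hqof1⟩ := hQsome k1 j1 hq1
      rw [hτ'none _ hq2] at heq
      rw [hτ'eq, hq1] at heq
      simp only [Option.getD_some] at heq
      have hkq : k2 = (↑q1 : Fin n) := heq.symm.trans hqj1.symm
      subst hkq
      exact absurd hk2 (hIDq_notin1 q1 p1 (hlink p1 q1 hqof1).1)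
    · obtain ⟨p1, q1, hpk1, hqj1, hqof1⟩ := hQsome k1 j1 hq1
      obtain ⟨p2, q2, hpk2, hqj2, hqof2⟩ := hQsome k2 j2 hq2
      rw [hτ'eq, hq1] at heq
      rw [hτ'eq, hq2] at heq
      simp only [Option.getD_some] at heq
      have hj : j1 = j2 := heq
      have hq12 : q1 = q2 := by
        have hc : (↑q1 : Fin n) = ↑q2 := by rw [hqj1, hqj2, hj]
        exact Subtype.coe_injective hc
      subst hq12
      have h1 := (hlink p1 q1 hqof1).1
      have h2 := (hlink p2 q1 hqof2).1
      rw [h1] at h2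
      have hp12 : p1 = p2 := by simpa using h2
      rw [← hpk1, ← hpk2, hp12]
  -- duality chain
  have hcost_eq : (∑ l, CC l (π l)) = (∑ l, α l) - (∑ r, β r) := by
    rw [Finset.sum_congr rfl (fun l _ => (htight l).symm), Finset.sum_sub_distrib,
      Equiv.sum_comp π β]
  have hαdl : ∀ dl : ↥N ⊕ Unit, α (Sum.inr dl) ≤ s := by
    intro dl
    have h1 := hbβ_ge (Sum.inr dl) (Sum.inr (Sum.inr ()))
    rw [hCC_rr] at h1
    have h2 : bβ (Sum.inr (Sum.inr ())) = s := hbβ_dr _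
    linarith
  have hD_le_S : (∑ l, α l) - (∑ r, β r) ≤ (∑ p : ↥P, v p) - (∑ q : ↥N, w q) := by
    have hsplitL : (∑ l, α l)
        = (∑ p : ↥P, α (Sum.inl p)) + ∑ dl : ↥N ⊕ Unit, α (Sum.inr dl) :=
      Fintype.sum_sum_type α
    have hβb : (∑ r, bβ r) ≤ ∑ r, β r := Finset.sum_le_sum fun r _ => hbβ_le r
    have hsplitR : (∑ r, bβ r)
        = (∑ q : ↥N, bβ (Sum.inl q)) + ∑ dr : ↥P ⊕ Unit, bβ (Sum.inr dr) :=
      Fintype.sum_sum_type bβ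
    have hdrsum : (∑ dr : ↥P ⊕ Unit, bβ (Sum.inr dr)) = (P.card : ℝ) * s + s := by
      rw [Finset.sum_congr rfl (fun dr _ => hbβ_dr dr), Finset.sum_const, Finset.card_univ,
        Fintype.card_sum, Fintype.card_coe, Fintype.card_unit, nsmul_eq_mul]
      push_cast
      ring
    have hdlsum : (∑ dl : ↥N ⊕ Unit, α (Sum.inr dl)) ≤ (N.card : ℝ) * s + s := by
      calc (∑ dl : ↥N ⊕ Unit, α (Sum.inr dl)) ≤ ∑ _dl : ↥N ⊕ Unit, s :=
            Finset.sum_le_sum fun dl _ => hαdl dl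
        _ = (N.card : ℝ) * s + s := by
            rw [Finset.sum_const, Finset.card_univ, Fintype.card_sum, Fintype.card_coe,
              Fintype.card_unit, nsmul_eq_mul]
            push_cast
            ring
    have hvsum : (∑ p : ↥P, v p) = (∑ p : ↥P, α (Sum.inl p)) - (P.card : ℝ) * s := by
      simp only [hvdef]
      rw [Finset.sum_sub_distrib, Finset.sum_const, Finset.card_univ, Fintype.card_coe,
        nsmul_eq_mul]
    have hwsum : (∑ q : ↥N, w q) = (∑ q : ↥N, bβ (Sum.inl q)) - (N.card : ℝ) * s := by
      simp only [hwdef]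
      rw [Finset.sum_sub_distrib, Finset.sum_const, Finset.card_univ, Fintype.card_coe,
        nsmul_eq_mul]
    linarith
  have hS_le_T : (∑ p : ↥P, v p) - (∑ q : ↥N, w q) ≤ ∑ k, (φ (x k) - φ (y k)) := by
    have hxsum : (∑ k, φ (x k)) = ∑ k ∈ P, φ (x k) :=
      (Finset.sum_subset (Finset.subset_univ P)
        (fun k _ hk => hφ0 _ (hxfr k (fun hx => hk ((hPmem k).mpr hx))))).symm
    have hysum : (∑ k, φ (y k)) = ∑ k ∈ N, φ (y k) :=
      (Finset.sum_subset (Finset.subset_univ N)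
        (fun k _ hk => hφ0 _ (hyfr k (fun hy => hk ((hNmem k).mpr hy))))).symm
    have hxsum2 : (∑ k ∈ P, φ (x k)) = ∑ p : ↥P, φ (x ↑p) :=
      (Finset.sum_coe_sort P (fun k => φ (x k))).symm
    have hysum2 : (∑ k ∈ N, φ (y k)) = ∑ q : ↥N, φ (y ↑q) :=
      (Finset.sum_coe_sort N (fun k => φ (y k))).symm
    have h1 : (∑ p : ↥P, v p) ≤ ∑ p : ↥P, φ (x ↑p) := Finset.sum_le_sum fun p _ => hφx p
    have h2 : (∑ q : ↥N, φ (y ↑q)) ≤ ∑ q : ↥N, w q := Finset.sum_le_sum fun q _ => hφy q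
    have hRHS : (∑ k, (φ (x k) - φ (y k)))
        = (∑ p : ↥P, φ (x ↑p)) - (∑ q : ↥N, φ (y ↑q)) := by
      rw [Finset.sum_sub_distrib, hxsum, hxsum2, hysum, hysum2]
    rw [hRHS]
    linarith
  -- realized costs
  set cPs : ↥P → ℝ := fun p => Option.elim (qof p) (m (x ↑p)) (fun q => 2 * dist (x ↑p) (y ↑q))
    with hcPs
  set cNs : ↥N → ℝ := fun q => if pof q = none then m (y ↑q) else 0 with hcNs
  have hcPs0 : ∀ p, 0 ≤ cPs p := by
    intro p
    simp only [hcPs]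
    rcases qof p with _ | q
    · exact hm0 _
    · simp only [Option.elim]
      positivity
  have hcNs0 : ∀ q, 0 ≤ cNs q := by
    intro q
    simp only [hcNs]
    split
    · exact hm0 _
    · exact le_rfl
  have hcNs_le : ∀ q, cNs q ≤ m (y ↑q) := by
    intro q
    simp only [hcNs]
    split
    · exact le_refl _
    · exact hm0 _
  have hRB_le_cost : (∑ p : ↥P, cPs p) + (∑ q : ↥N, cNs q) ≤ ∑ l, CC l (π l) := by
    set hh : (↥N ⊕ (↥P ⊕ Unit)) → ℝ := Sum.elim (fun q => cNs q) (fun _ => 0) with hhh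
    have hhsum : (∑ l, hh (π l)) = ∑ q : ↥N, cNs q := by
      rw [Equiv.sum_comp π hh, Fintype.sum_sum_type]
      simp [hhh]
    have hcPsum : (∑ l, Sum.elim cPs (fun (_ : ↥N ⊕ Unit) => (0:ℝ)) l) = ∑ p : ↥P, cPs p := by
      rw [Fintype.sum_sum_type]
      simp
    have hpoint : ∀ l, Sum.elim cPs (fun (_ : ↥N ⊕ Unit) => (0:ℝ)) l + hh (π l) ≤ CC l (π l) := by
      intro l
      rcases l with p | dl
      · simp only [Sum.elim_inl]
        rcases hπl : π (Sum.inl p) with q | dr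
        · rw [hCC_ll]
          by_cases hsh : 2 * dist (x ↑p) (y ↑q) ≤ m (x ↑p) + m (y ↑q)
          · have hq : qof p = some q := by
              simp only [hqof]
              rw [hπl]
              simp only [Sum.elim_inl]
              rw [if_pos hsh]
            have hp : pof q = some p := (hlink p q hq).1
            have e1 : cPs p = 2 * dist (x ↑p) (y ↑q) := by
              simp only [hcPs, hq, Option.elim]
            have e2 : hh (Sum.inl q) = 0 := by
              simp only [hhh, Sum.elim_inl, hcNs, hp]
              simp
            rw [e1, e2, min_eq_left hsh]
            linarith
          · have hq : qof p = none := by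
              simp only [hqof]
              rw [hπl]
              simp only [Sum.elim_inl]
              rw [if_neg hsh]
            have e1 : cPs p = m (x ↑p) := by simp only [hcPs, hq, Option.elim]
            have e2 : hh (Sum.inl q) ≤ m (y ↑q) := by
              simp only [hhh, Sum.elim_inl]
              exact hcNs_le q
            rw [min_eq_right (le_of_lt (not_le.mp hsh)), e1]
            linarith
        · rw [hCC_lr]
          have hq : qof p = none := by
            simp only [hqof]
            rw [hπl]
            simp only [Sum.elim_inr]
          have e1 : cPs p = m (x ↑p) := by simp only [hcPs, hq, Option.elim]
          have e2 : hh (Sum.inr dr) = 0 := by simp only [hhh, Sum.elim_inr]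
          rw [e1, e2]
          linarith
      · simp only [Sum.elim_inr]
        rcases hπl : π (Sum.inr dl) with q | dr
        · rw [hCC_rl]
          have e2 : hh (Sum.inl q) ≤ m (y ↑q) := by
            simp only [hhh, Sum.elim_inl]
            exact hcNs_le q
          linarith
        · rw [hCC_rr]
          have e2 : hh (Sum.inr dr) = 0 := by simp only [hhh, Sum.elim_inr]
          linarith
    calc (∑ p : ↥P, cPs p) + (∑ q : ↥N, cNs q)
        = ∑ l, (Sum.elim cPs (fun (_ : ↥N ⊕ Unit) => (0:ℝ)) l + hh (π l)) := by
          rw [Finset.sum_add_distrib, hhsum, hcPsum]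
      _ ≤ ∑ l, CC l (π l) := Finset.sum_le_sum fun l _ => hpoint l
  -- conclusion: energy of the constructed pair is at most T(φ)
  refine ⟨ID, τ', hinjON, φ, hφadm, ?_⟩
  have hofReal2 : ∀ d : ℝ, ENNReal.ofReal (2 * d) = 2 * ENNReal.ofReal d := by
    intro d
    rw [ENNReal.ofReal_mul (by norm_num : (0:ℝ) ≤ 2)]
    norm_num
  have hseg_le : ∀ (a b : R2),
      2 * μH[1] (segment ℝ a b ∩ Ω) ≤ ENNReal.ofReal (2 * dist a b) := by
    intro a b
    rw [hofReal2]
    exact mul_le_mul_right (hausdorff_seg_upper Ω) 2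
  set cP' : Fin n → ℝ≥0∞ := fun k =>
    if hx : x k ∈ Ω then ENNReal.ofReal (cPs ⟨k, (hPmem k).mpr hx⟩) else 0 with hcP'
  set cN' : Fin n → ℝ≥0∞ := fun k =>
    if hy : y k ∈ Ω then ENNReal.ofReal (cNs ⟨k, (hNmem k).mpr hy⟩) else 0 with hcN'
  have hcP'P : ∀ p : ↥P, cP' ↑p = ENNReal.ofReal (cPs p) := by
    intro p
    simp only [hcP']
    rw [dif_pos ((hPmem ↑p).mp p.2), Subtype.coe_eta]
  have hcN'N : ∀ q : ↥N, cN' ↑q = ENNReal.ofReal (cNs q) := by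
    intro q
    simp only [hcN']
    rw [dif_pos ((hNmem ↑q).mp q.2), Subtype.coe_eta]
  have claimP : ∀ k ∈ P, ((if k ∈ ID then 0 else 1) : ℝ≥0∞)
      + (if k ∈ ID then 2 * μH[1] (segment ℝ (y (τ' k)) (x k) ∩ Ω) else 0) ≤ cP' k := by
    intro k hk
    have hx : x k ∈ Ω := (hPmem k).mp hk
    have hcpk : cP' k = ENNReal.ofReal (cPs ⟨k, hk⟩) := by
      simp only [hcP']
      rw [dif_pos hx]
    rw [hcpk]
    rcases hq : qof ⟨k, hk⟩ with _ | q
    · by_cases hsh : 2 * infDist (x k) (frontier Ω) ≤ 1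
      · have hkID : k ∈ ID := hIDp_short k hx hsh
        have hQk : Qof k = none := by
          rw [show Qof k = (qof (⟨k, hk⟩ : ↥P)).map Subtype.val from hQofP ⟨k, hk⟩, hq]
          rfl
        have hτk : τ' k = k := hτ'none k hQk
        rw [if_pos hkID, if_pos hkID, zero_add, hτk]
        have hcp : cPs ⟨k, hk⟩ = 2 * infDist (x k) (frontier Ω) := by
          simp only [hcPs, hq, Option.elim]
          rw [hm]
          exact min_eq_right hsh
        rw [hcp]
        have hd := (hPf1 k hx).2
        calc 2 * μH[1] (segment ℝ (y k) (x k) ∩ Ω)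
            ≤ ENNReal.ofReal (2 * dist (y k) (x k)) := hseg_le _ _
          _ = ENNReal.ofReal (2 * infDist (x k) (frontier Ω)) := by rw [dist_comm, hd]
      · have hkID : k ∉ ID := hIDp_notin ⟨k, hk⟩ hq hsh
        rw [if_neg hkID, if_neg hkID, add_zero]
        have hcp : cPs ⟨k, hk⟩ = 1 := by
          simp only [hcPs, hq, Option.elim]
          rw [hm]
          exact min_eq_left (le_of_lt (not_le.mp hsh))
        rw [hcp]
        simp
    · have hpair := hIDp_some ⟨k, hk⟩ q hq
      have hkID : k ∈ ID := hpair.1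
      have hτk : τ' k = ↑q := hpair.2
      rw [if_pos hkID, if_pos hkID, zero_add, hτk]
      have hcp : cPs ⟨k, hk⟩ = 2 * dist (x k) (y ↑q) := by
        simp only [hcPs, hq, Option.elim]
      rw [hcp]
      calc 2 * μH[1] (segment ℝ (y ↑q) (x k) ∩ Ω)
          ≤ ENNReal.ofReal (2 * dist (y ↑q) (x k)) := hseg_le _ _
        _ = ENNReal.ofReal (2 * dist (x k) (y ↑q)) := by rw [dist_comm]
  have claimN : ∀ k ∈ N, ((if k ∈ ID.image τ' then 0 else 1) : ℝ≥0∞)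
      + (if k ∈ ID then 2 * μH[1] (segment ℝ (y (τ' k)) (x k) ∩ Ω) else 0) ≤ cN' k := by
    intro k hk
    have hy : y k ∈ Ω := (hNmem k).mp hk
    have hcnk : cN' k = ENNReal.ofReal (cNs ⟨k, hk⟩) := by
      simp only [hcN']
      rw [dif_pos hy]
    rw [hcnk]
    have hτk : τ' k = k := hτ'N ⟨k, hk⟩
    rcases hp : pof ⟨k, hk⟩ with _ | p
    · by_cases hsh : 2 * infDist (y k) (frontier Ω) ≤ 1
      · have hkID : k ∈ ID := hIDq_in ⟨k, hk⟩ hp hsh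
        have himg : k ∈ ID.image τ' := Finset.mem_image.mpr ⟨k, hkID, hτk⟩
        rw [if_pos himg, if_pos hkID, zero_add, hτk]
        have hcq : cNs ⟨k, hk⟩ = 2 * infDist (y k) (frontier Ω) := by
          simp only [hcNs, if_pos hp]
          rw [hm]
          exact min_eq_right hsh
        rw [hcq]
        have hd := (hPf2 k hy).2
        calc 2 * μH[1] (segment ℝ (y k) (x k) ∩ Ω)
            ≤ ENNReal.ofReal (2 * dist (y k) (x k)) := hseg_le _ _
          _ = ENNReal.ofReal (2 * infDist (y k) (frontier Ω)) := by rw [dist_comm, hd]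
      · have hkID : k ∉ ID := hIDq_notin2 ⟨k, hk⟩ hp hsh
        rw [if_neg hkID, add_zero]
        have hcq : cNs ⟨k, hk⟩ = 1 := by
          simp only [hcNs, if_pos hp]
          rw [hm]
          exact min_eq_left (le_of_lt (not_le.mp hsh))
        rw [hcq]
        split <;> simp
    · have hq2 : qof p = some ⟨k, hk⟩ := hlink2 p ⟨k, hk⟩ hp
      have hpID : (↑p : Fin n) ∈ ID := (hIDp_some p ⟨k, hk⟩ hq2).1
      have hτp : τ' ↑p = k := (hIDp_some p ⟨k, hk⟩ hq2).2
      have himg : k ∈ ID.image τ' := Finset.mem_image.mpr ⟨↑p, hpID, hτp⟩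
      have hkID : k ∉ ID := hIDq_notin1 ⟨k, hk⟩ p hp
      rw [if_pos himg, if_neg hkID, add_zero]
      exact zero_le
  -- convert the energy to sums over P and N
  have hA : ((IDᶜ.filter fun k => x k ∈ Ω).card : ℝ≥0∞)
      = ∑ k ∈ P, ((if k ∈ ID then 0 else 1) : ℝ≥0∞) := by
    have hset : IDᶜ.filter (fun k => x k ∈ Ω) = P.filter (fun k => ¬ k ∈ ID) := by
      ext k
      simp only [Finset.mem_filter, Finset.mem_compl]
      rw [hPmem k]
      tauto
    rw [hset, Finset.card_filter]
    push_cast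
    refine Finset.sum_congr rfl fun k _ => ?_
    by_cases h : k ∈ ID <;> simp [h]
  have hB : (((Finset.univ \ ID.image τ').filter fun j => y j ∈ Ω).card : ℝ≥0∞)
      = ∑ k ∈ N, ((if k ∈ ID.image τ' then 0 else 1) : ℝ≥0∞) := by
    have hset : (Finset.univ \ ID.image τ').filter (fun j => y j ∈ Ω)
        = N.filter (fun k => ¬ k ∈ ID.image τ') := by
      ext k
      simp only [Finset.mem_filter, Finset.mem_sdiff, Finset.mem_univ, true_and]
      rw [hNmem k]
      tauto
    rw [hset, Finset.card_filter]
    push_cast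
    refine Finset.sum_congr rfl fun k _ => ?_
    by_cases h : k ∈ ID.image τ' <;> simp [h]
  have hμ : (2:ℝ≥0∞) * (∑ k ∈ ID, μH[1] (segment ℝ (y (τ' k)) (x k) ∩ Ω))
      = (∑ k ∈ P, (if k ∈ ID then 2 * μH[1] (segment ℝ (y (τ' k)) (x k) ∩ Ω) else 0))
        + ∑ k ∈ N, (if k ∈ ID then 2 * μH[1] (segment ℝ (y (τ' k)) (x k) ∩ Ω) else 0) := by
    rw [Finset.mul_sum]
    have h1 : (∑ k ∈ ID, 2 * μH[1] (segment ℝ (y (τ' k)) (x k) ∩ Ω))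
        = ∑ k : Fin n, (if k ∈ ID then 2 * μH[1] (segment ℝ (y (τ' k)) (x k) ∩ Ω) else 0) := by
      rw [Finset.sum_ite_mem, Finset.univ_inter]
    rw [h1, ← Finset.sum_filter_add_sum_filter_not Finset.univ (fun k => x k ∈ Ω)
      (fun k => (if k ∈ ID then 2 * μH[1] (segment ℝ (y (τ' k)) (x k) ∩ Ω) else 0)),
      ← Finset.sum_filter_add_sum_filter_not (Finset.univ.filter (fun k => ¬ x k ∈ Ω))
      (fun k => y k ∈ Ω)
      (fun k => (if k ∈ ID then 2 * μH[1] (segment ℝ (y (τ' k)) (x k) ∩ Ω) else 0))]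
    have hzero : (∑ k ∈ (Finset.univ.filter (fun k => ¬ x k ∈ Ω)).filter (fun k => ¬ y k ∈ Ω),
        (if k ∈ ID then 2 * μH[1] (segment ℝ (y (τ' k)) (x k) ∩ Ω) else 0)) = 0 := by
      apply Finset.sum_eq_zero
      intro k hk
      simp only [Finset.mem_filter] at hk
      rw [if_neg (hIDother k hk.1.2 hk.2)]
    have hNN : (Finset.univ.filter (fun k => ¬ x k ∈ Ω)).filter (fun k => y k ∈ Ω) = N := by
      ext k
      simp only [Finset.mem_filter, Finset.mem_univ, true_and]
      rw [hNmem k]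
      exact ⟨fun h => h.2, fun h => ⟨hyx k h, h⟩⟩
    have hPP : Finset.univ.filter (fun k => x k ∈ Ω) = P := by rw [hP]
    rw [hzero, add_zero, hNN, hPP]
  have hsumP : (∑ k ∈ P, cP' k) = ENNReal.ofReal (∑ p : ↥P, cPs p) :=
    calc (∑ k ∈ P, cP' k) = ∑ p : ↥P, cP' ↑p := (Finset.sum_coe_sort P cP').symm
      _ = ∑ p : ↥P, ENNReal.ofReal (cPs p) := Finset.sum_congr rfl fun p _ => hcP'P p
      _ = ENNReal.ofReal (∑ p : ↥P, cPs p) :=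
          (ENNReal.ofReal_sum_of_nonneg (fun p _ => hcPs0 p)).symm
  have hsumN : (∑ k ∈ N, cN' k) = ENNReal.ofReal (∑ q : ↥N, cNs q) :=
    calc (∑ k ∈ N, cN' k) = ∑ q : ↥N, cN' ↑q := (Finset.sum_coe_sort N cN').symm
      _ = ∑ q : ↥N, ENNReal.ofReal (cNs q) := Finset.sum_congr rfl fun q _ => hcN'N q
      _ = ENNReal.ofReal (∑ q : ↥N, cNs q) :=
          (ENNReal.ofReal_sum_of_nonneg (fun q _ => hcNs0 q)).symm
  have hcomb : energy Ω x y ID τ' ≤ (∑ k ∈ P, cP' k) + ∑ k ∈ N, cN' k := by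
    unfold energy
    rw [hA, hB, hμ]
    have harr : (∑ k ∈ P, ((if k ∈ ID then 0 else 1) : ℝ≥0∞))
        + (∑ k ∈ N, ((if k ∈ ID.image τ' then 0 else 1) : ℝ≥0∞))
        + ((∑ k ∈ P, (if k ∈ ID then 2 * μH[1] (segment ℝ (y (τ' k)) (x k) ∩ Ω) else 0))
          + ∑ k ∈ N, (if k ∈ ID then 2 * μH[1] (segment ℝ (y (τ' k)) (x k) ∩ Ω) else 0))
        = (∑ k ∈ P, (((if k ∈ ID then 0 else 1) : ℝ≥0∞)
            + (if k ∈ ID then 2 * μH[1] (segment ℝ (y (τ' k)) (x k) ∩ Ω) else 0)))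
          + ∑ k ∈ N, (((if k ∈ ID.image τ' then 0 else 1) : ℝ≥0∞)
            + (if k ∈ ID then 2 * μH[1] (segment ℝ (y (τ' k)) (x k) ∩ Ω) else 0)) := by
      rw [Finset.sum_add_distrib, Finset.sum_add_distrib]
      ring
    rw [harr]
    exact add_le_add (Finset.sum_le_sum claimP) (Finset.sum_le_sum claimN)
  refine le_trans hcomb ?_
  rw [hsumP, hsumN, ← ENNReal.ofReal_add (Finset.sum_nonneg fun p _ => hcPs0 p)
    (Finset.sum_nonneg fun q _ => hcNs0 q)]
  apply ENNReal.ofReal_le_ofReal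
  linarith [hRB_le_cost, hD_le_S, hS_le_T, hcost_eq]


/-- **Lemma 3.2 & Proposition 3.3 (combinatorial characterization of the flat norm).**
For a finite family of dipoles satisfying `(P_f)` with associated functional
`T(φ) = Σ_k (φ(x_k) − φ(y_k))`, the flat norm `‖T‖_{flat,α}` equals the minimum of the
energy `E(I_P,I_D,τ)` over all partitions and injections, and both the supremum
defining the flat norm and this minimum are attained. -/
theorem flatNorm_eq_min_energy (Ω : Set R2) (hΩo : IsOpen Ω)
    (hΩb : Bornology.IsBounded Ω) (hΩc : IsConnected Ω) (hΩl : HasLipschitzBoundary Ω)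
    (n : ℕ) (x y : Fin n → R2) (hPf : SatisfiesPf Ω x y) :
    (∃ (ID : Finset (Fin n)) (τ : Fin n → Fin n), Set.InjOn τ ↑ID ∧
        flatNorm Ω 2 (fun φ => ∑ k, (φ (x k) - φ (y k))) = energy Ω x y ID τ ∧
        ∀ (ID' : Finset (Fin n)) (τ' : Fin n → Fin n), Set.InjOn τ' ↑ID' →
          energy Ω x y ID τ ≤ energy Ω x y ID' τ') ∧
    ∃ φ : R2 → ℝ, FlatAdmissible Ω (frontier Ω) 2 φ ∧
      ENNReal.ofReal (∑ k, (φ (x k) - φ (y k))) =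
        flatNorm Ω 2 (fun ψ => ∑ k, (ψ (x k) - ψ (y k))) := by
  classical
  have hne : Ω.Nonempty := hΩc.nonempty
  have hF : (frontier Ω).Nonempty := frontier_nonempty_of_bounded hΩo hΩb hne
  obtain ⟨ID₁, τ₁, hinj₁, φ, hφadm, hchain⟩ := key_construction hΩo hF hPf
  set S : Finset (Finset (Fin n) × (Fin n → Fin n)) :=
    Finset.univ.filter (fun p => Set.InjOn p.2 ↑p.1) with hS
  have hSmem : ∀ (p : Finset (Fin n) × (Fin n → Fin n)), Set.InjOn p.2 ↑p.1 → p ∈ S := by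
    intro p hp
    rw [hS]
    exact Finset.mem_filter.mpr ⟨Finset.mem_univ _, hp⟩
  have hSne : S.Nonempty := ⟨(ID₁, τ₁), hSmem _ hinj₁⟩
  obtain ⟨p₀, hp₀S, hp₀min⟩ := Finset.exists_min_image S (fun p => energy Ω x y p.1 p.2) hSne
  have hinj₀ : Set.InjOn p₀.2 ↑p₀.1 := by
    rw [hS] at hp₀S
    exact (Finset.mem_filter.mp hp₀S).2
  have hub : flatNorm Ω 2 (fun ψ => ∑ k, (ψ (x k) - ψ (y k))) ≤ energy Ω x y p₀.1 p₀.2 := by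
    refine iSup₂_le ?_
    intro ψ hψ
    exact weak_duality hΩo hF hPf hψ p₀.1 p₀.2 hinj₀
  have hlb : ENNReal.ofReal (∑ k, (φ (x k) - φ (y k)))
      ≤ flatNorm Ω 2 (fun ψ => ∑ k, (ψ (x k) - ψ (y k))) :=
    le_iSup₂ (f := fun (ψ : R2 → ℝ) (_ : ψ ∈ {ψ : R2 → ℝ | FlatAdmissible Ω (frontier Ω) 2 ψ})
      => ENNReal.ofReal (∑ k, (ψ (x k) - ψ (y k)))) φ hφadm
  have h1 : energy Ω x y p₀.1 p₀.2 ≤ ENNReal.ofReal (∑ k, (φ (x k) - φ (y k))) :=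
    le_trans (hp₀min (ID₁, τ₁) (hSmem _ hinj₁)) hchain
  constructor
  · refine ⟨p₀.1, p₀.2, hinj₀, le_antisymm hub (le_trans h1 hlb), ?_⟩
    intro ID' τ' hinj'
    exact hp₀min (ID', τ') (hSmem (ID', τ') hinj')
  · exact ⟨φ, hφadm, le_antisymm hlb (le_trans hub h1)⟩
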